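/- arXiv:2304.09551 — 8 statements merged into one kernel-verified Lean document; each statement's English description precedes it below -/
import Mathlib

section
/- Let μ, ν be probability measures on ℝ with finite first moments. Then μ ≤_cx ν (μ is smaller than ν in the convex order) if and only if u_μ(y) ≤ u_ν(y) for all y ∈ ℝ and μ and ν have the same mean. -/
open MeasureTheory

/-- The potential function of a measure `μ` on `ℝ`. -/
noncomputable def potential (μ : Measure ℝ) (y : ℝ) : ℝ := ∫ x, |y - x| ∂μ

/-- The convex order on measures on `ℝ`: `∫ φ dμ ≤ ∫ φ dν` for every convex `φ`
for which both integrals are defined. -/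
def ConvexOrder (μ ν : Measure ℝ) : Prop :=
  ∀ φ : ℝ → ℝ, ConvexOn ℝ Set.univ φ → Integrable φ μ → Integrable φ ν →
    ∫ x, φ x ∂μ ≤ ∫ x, φ x ∂ν

open Filter Topology

set_option linter.unusedSectionVars false


section Tangent

variable {φ : ℝ → ℝ}

/-- slope of φ between a and b -/
noncomputable def cslope (φ : ℝ → ℝ) (a b : ℝ) : ℝ := (φ b - φ a) / (b - a)

lemma cslope_mono_adj (hφ : ConvexOn ℝ Set.univ φ) {a b c : ℝ} (hab : a < b) (hbc : b < c) :
    cslope φ a b ≤ cslope φ b c :=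
  hφ.slope_mono_adjacent (Set.mem_univ a) (Set.mem_univ c) hab hbc

noncomputable def subSlope (φ : ℝ → ℝ) (p : ℝ) : ℝ :=
  sSup ((fun x => cslope φ x p) '' Set.Iio p)

lemma cslope_comm (φ : ℝ → ℝ) (a b : ℝ) : cslope φ a b = cslope φ b a := by
  unfold cslope
  rcases eq_or_ne a b with rfl | h
  · rfl
  · rw [div_eq_div_iff (sub_ne_zero.mpr (fun hh => h hh.symm)) (sub_ne_zero.mpr h)]
    ring

lemma subSlope_bddAbove (hφ : ConvexOn ℝ Set.univ φ) (p : ℝ) :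
    BddAbove ((fun x => cslope φ x p) '' Set.Iio p) := by
  refine ⟨cslope φ p (p+1), ?_⟩
  rintro s ⟨x, hx, rfl⟩
  exact cslope_mono_adj hφ hx (lt_add_one p)

lemma subSlope_nonempty (p : ℝ) : ((fun x => cslope φ x p) '' Set.Iio p).Nonempty :=
  ⟨cslope φ (p-1) p, ⟨p-1, by simp, rfl⟩⟩

lemma cslope_le_subSlope (hφ : ConvexOn ℝ Set.univ φ) {x p : ℝ} (h : x < p) :
    cslope φ x p ≤ subSlope φ p :=
  le_csSup (subSlope_bddAbove hφ p) ⟨x, h, rfl⟩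

lemma subSlope_le_cslope (hφ : ConvexOn ℝ Set.univ φ) {p q : ℝ} (h : p < q) :
    subSlope φ p ≤ cslope φ p q := by
  refine csSup_le (subSlope_nonempty p) ?_
  rintro s ⟨x, hx, rfl⟩
  exact cslope_mono_adj hφ hx h

lemma subSlope_mono (hφ : ConvexOn ℝ Set.univ φ) {p q : ℝ} (h : p ≤ q) :
    subSlope φ p ≤ subSlope φ q := by
  rcases eq_or_lt_of_le h with rfl | h
  · exact le_rfl
  · exact (subSlope_le_cslope hφ h).trans (cslope_le_subSlope hφ h)

/-- tangent line to φ at p -/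
noncomputable def tangent (φ : ℝ → ℝ) (p : ℝ) (x : ℝ) : ℝ :=
  φ p + subSlope φ p * (x - p)

lemma tangent_self (φ : ℝ → ℝ) (p : ℝ) : tangent φ p p = φ p := by simp [tangent]

lemma tangent_le (hφ : ConvexOn ℝ Set.univ φ) (p x : ℝ) : tangent φ p x ≤ φ x := by
  unfold tangent
  rcases lt_trichotomy x p with h | rfl | h
  · have := cslope_le_subSlope hφ h
    unfold cslope at this
    rw [div_le_iff₀ (by linarith)] at this
    nlinarith
  · simp
  · have := subSlope_le_cslope hφ h
    unfold cslope at this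
    rw [le_div_iff₀ (by linarith)] at this
    nlinarith

end Tangent

section Integrals

variable {μ : Measure ℝ} [IsProbabilityMeasure μ]

lemma integrable_id'' (hμ : Integrable (fun x => |x|) μ) : Integrable (fun x : ℝ => x) μ :=
  hμ.mono measurable_id.aestronglyMeasurable (by simp)

lemma integrable_affine' (hμ : Integrable (fun x => |x|) μ) (a b c : ℝ) : Integrable (fun x => a + b * (x - c)) μ := by
  have : Integrable (fun x : ℝ => x) μ := integrable_id'' hμ
  exact (integrable_const a).add (((this.sub (integrable_const c)).const_mul b))

lemma integral_affine' (hμ : Integrable (fun x => |x|) μ) (a b c : ℝ) :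
    ∫ x, (a + b * (x - c)) ∂μ = a + b * ((∫ x, x ∂μ) - c) := by
  have hid : Integrable (fun x : ℝ => x) μ := integrable_id'' hμ
  have hsub : Integrable (fun x : ℝ => x - c) μ := hid.sub (integrable_const c)
  have hbsub : Integrable (fun x : ℝ => b * (x - c)) μ := hsub.const_mul b
  rw [integral_add (integrable_const a) hbsub, integral_const, integral_const_mul,
    integral_sub hid (integrable_const c), integral_const]
  simp

lemma integrable_abs_sub' (hμ : Integrable (fun x => |x|) μ) (t : ℝ) : Integrable (fun x => |x - t|) μ := by
  refine (hμ.add (integrable_const |t|)).mono ?_ ?_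
  · exact (continuous_abs.comp (continuous_id.sub continuous_const)).aestronglyMeasurable
  · refine Filter.Eventually.of_forall fun x => ?_
    simp only [Real.norm_eq_abs, abs_abs]
    calc |x - t| ≤ |x| + |t| := abs_sub _ _
    _ ≤ |(|x| + |t|)| := le_abs_self _

lemma integrable_hinge' (hμ : Integrable (fun x => |x|) μ) (t : ℝ) : Integrable (fun x => max (x - t) 0) μ := by
  refine (integrable_abs_sub' hμ t).mono ?_ ?_
  · exact (continuous_id.sub continuous_const).max continuous_const |>.aestronglyMeasurable
  · refine Filter.Eventually.of_forall fun x => ?_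
    simp only [Real.norm_eq_abs, abs_abs]
    rw [abs_of_nonneg (le_max_right _ _)]
    exact (max_le (le_abs_self _) (abs_nonneg _)).trans le_rfl

lemma integral_hinge' (hμ : Integrable (fun x => |x|) μ) (t : ℝ) :
    ∫ x, max (x - t) 0 ∂μ = (potential μ t + (∫ x, x ∂μ) - t) / 2 := by
  have h1 : ∀ x : ℝ, max (x - t) 0 = (|x - t| + (x - t)) / 2 := by
    intro x
    rcases le_total x t with h | h
    · rw [max_eq_right (by linarith), abs_of_nonpos (by linarith)]; ring
    · rw [max_eq_left (by linarith), abs_of_nonneg (by linarith)]; ring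
  have h2 : potential μ t = ∫ x, |x - t| ∂μ := by
    unfold potential
    congr 1; ext x; rw [abs_sub_comm]
  have hsub : Integrable (fun x : ℝ => x - t) μ := (integrable_id'' hμ).sub (integrable_const t)
  simp_rw [h1]
  rw [integral_div, integral_add (integrable_abs_sub' hμ t) hsub,
    integral_sub (integrable_id'' hμ) (integrable_const t), integral_const, h2]
  simp; ring

end Integrals

section Key

variable {μ ν : Measure ℝ} [IsProbabilityMeasure μ] [IsProbabilityMeasure ν]

lemma hinge_le' (hμ : Integrable (fun x => |x|) μ) (hν : Integrable (fun x => |x|) ν)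
    (hpot : ∀ y : ℝ, potential μ y ≤ potential ν y) (hmean : ∫ x, x ∂μ = ∫ x, x ∂ν)
    (t : ℝ) : ∫ x, max (x - t) 0 ∂μ ≤ ∫ x, max (x - t) 0 ∂ν := by
  rw [integral_hinge' hμ t, integral_hinge' hν t, hmean]
  have := hpot t
  linarith

/-- envelope of tangent lines at points `p 0, ..., p m` -/
noncomputable def envl (φ : ℝ → ℝ) (p : ℕ → ℝ) (m : ℕ) (x : ℝ) : ℝ :=
  (Finset.range (m+1)).sup' Finset.nonempty_range_add_one (fun k => tangent φ (p k) x)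

lemma envl_succ (φ : ℝ → ℝ) (p : ℕ → ℝ) (m : ℕ) (x : ℝ) :
    envl φ p (m+1) x = max (tangent φ (p (m+1)) x) (envl φ p m x) := by
  unfold envl
  apply le_antisymm
  · refine Finset.sup'_le _ _ fun k hk => ?_
    rcases Nat.lt_succ_iff_lt_or_eq.mp (Finset.mem_range.mp hk) with h | rfl
    · exact le_max_of_le_right
        (Finset.le_sup' (fun k => tangent φ (p k) x) (Finset.mem_range.mpr h))
    · exact le_max_left _ _
  · refine max_le ?_ ?_
    · exact Finset.le_sup' (fun k => tangent φ (p k) x)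
        (Finset.mem_range.mpr (Nat.lt_succ_self _))
    · refine Finset.sup'_le _ _ fun k hk => ?_
      exact Finset.le_sup' (fun k => tangent φ (p k) x)
        (Finset.mem_range.mpr ((Finset.mem_range.mp hk).trans (Nat.lt_succ_self _)))

lemma envl_zero (φ : ℝ → ℝ) (p : ℕ → ℝ) (x : ℝ) : envl φ p 0 x = tangent φ (p 0) x := by
  unfold envl
  simp

lemma envl_le {φ : ℝ → ℝ} (hφ : ConvexOn ℝ Set.univ φ) (p : ℕ → ℝ) (m : ℕ) (x : ℝ) :
    envl φ p m x ≤ φ x :=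
  Finset.sup'_le _ _ fun k _ => tangent_le hφ (p k) x

lemma le_envl (φ : ℝ → ℝ) (p : ℕ → ℝ) {k m : ℕ} (hk : k ≤ m) (x : ℝ) :
    tangent φ (p k) x ≤ envl φ p m x :=
  Finset.le_sup' (fun k => tangent φ (p k) x) (Finset.mem_range.mpr (Nat.lt_succ_of_le hk))

lemma envelope_key (hμ : Integrable (fun x => |x|) μ) (hν : Integrable (fun x => |x|) ν)
    (hpot : ∀ y : ℝ, potential μ y ≤ potential ν y) (hmean : ∫ x, x ∂μ = ∫ x, x ∂ν)
    {φ : ℝ → ℝ} (hφ : ConvexOn ℝ Set.univ φ) (p : ℕ → ℝ) (hp : Monotone p) (m : ℕ) :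
    Integrable (envl φ p m) μ ∧ Integrable (envl φ p m) ν ∧
      (∫ x, envl φ p m x ∂μ) ≤ (∫ x, envl φ p m x ∂ν) ∧
      ∀ x, p m ≤ x → envl φ p m x = tangent φ (p m) x := by
  induction m with
  | zero =>
    have e0 : envl φ p 0 = tangent φ (p 0) := funext fun x => envl_zero φ p x
    rw [e0]
    refine ⟨integrable_affine' hμ _ _ _, integrable_affine' hν _ _ _, ?_, fun x _ => rfl⟩
    show (∫ x, (φ (p 0) + subSlope φ (p 0) * (x - p 0)) ∂μ)
      ≤ ∫ x, (φ (p 0) + subSlope φ (p 0) * (x - p 0)) ∂ν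
    rw [integral_affine' hμ, integral_affine' hν, hmean]
  | succ m ih =>
    obtain ⟨ihμ, ihν, ihint, ihtail⟩ := ih
    have hqr : p m ≤ p (m+1) := hp (Nat.le_succ m)
    have hdd : subSlope φ (p m) ≤ subSlope φ (p (m+1)) := subSlope_mono hφ hqr
    have hA : φ (p (m+1)) + subSlope φ (p (m+1)) * (p m - p (m+1)) ≤ φ (p m) := by
      have := tangent_le hφ (p (m+1)) (p m); unfold tangent at this; exact this
    have hB : φ (p m) + subSlope φ (p m) * (p (m+1) - p m) ≤ φ (p (m+1)) := by
      have := tangent_le hφ (p m) (p (m+1)); unfold tangent at this; exact this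
    rcases eq_or_lt_of_le hdd with heq | hlt
    · -- equal slopes: the two tangent lines coincide
      have hEq : ∀ x, tangent φ (p (m+1)) x = tangent φ (p m) x := by
        intro x
        unfold tangent
        rw [← heq] at hA ⊢
        linarith
      have hsame : envl φ p (m+1) = envl φ p m := by
        funext x
        rw [envl_succ, hEq x, max_eq_right (le_envl φ p (le_refl m) x)]
      rw [hsame]
      exact ⟨ihμ, ihν, ihint, fun x hx => by
        rw [ihtail x (hqr.trans hx), ← hEq x]⟩
    · -- strictly increasing slope: add a hinge
      obtain ⟨c, hc⟩ : ∃ c : ℝ, c = subSlope φ (p (m+1)) - subSlope φ (p m) := ⟨_, rfl⟩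
      have hcpos : 0 < c := by rw [hc]; linarith
      obtain ⟨t, ht⟩ : ∃ t : ℝ, t = (φ (p m) - subSlope φ (p m) * p m
          - (φ (p (m+1)) - subSlope φ (p (m+1)) * p (m+1))) / c := ⟨_, rfl⟩
      have hcne : subSlope φ (p (m+1)) - subSlope φ (p m) ≠ 0 :=
        sub_ne_zero.mpr (ne_of_lt hlt).symm
      have hcross : ∀ x, (φ (p (m+1)) + subSlope φ (p (m+1)) * (x - p (m+1)))
          - (φ (p m) + subSlope φ (p m) * (x - p m)) = c * (x - t) := by
        intro x
        rw [ht, hc]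
        field_simp
        ring
      have hcrossT : ∀ x, tangent φ (p (m+1)) x - tangent φ (p m) x = c * (x - t) := by
        intro x; unfold tangent; exact hcross x
      have ht1 : p m ≤ t := by nlinarith [hcross (p m), hA, hcpos]
      have ht2 : t ≤ p (m+1) := by nlinarith [hcross (p (m+1)), hB, hcpos]
      have hId : envl φ p (m+1) = fun x => envl φ p m x + c * max (x - t) 0 := by
        funext x
        rw [envl_succ]
        rcases le_total x t with hx | hx
        · have h0 : max (x - t) 0 = 0 := max_eq_right (by linarith)
          have h2 : tangent φ (p (m+1)) x ≤ tangent φ (p m) x := by nlinarith [hcrossT x]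
          have h3 : max (tangent φ (p (m+1)) x) (envl φ p m x) = envl φ p m x :=
            max_eq_right (h2.trans (le_envl φ p (le_refl m) x))
          rw [h0, h3]; ring
        · have hqx : p m ≤ x := ht1.trans hx
          have htail := ihtail x hqx
          have h0 : max (x - t) 0 = x - t := max_eq_left (by linarith)
          have h2 : tangent φ (p m) x ≤ tangent φ (p (m+1)) x := by nlinarith [hcrossT x]
          have h3 : max (tangent φ (p (m+1)) x) (envl φ p m x) = tangent φ (p (m+1)) x := by
            rw [htail]; exact max_eq_left h2
          rw [h0, h3, htail]
          have := hcrossT x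
          linarith
      have hintμ : Integrable (fun x => envl φ p m x + c * max (x - t) 0) μ :=
        ihμ.add ((integrable_hinge' hμ t).const_mul c)
      have hintν : Integrable (fun x => envl φ p m x + c * max (x - t) 0) ν :=
        ihν.add ((integrable_hinge' hν t).const_mul c)
      rw [hId]
      refine ⟨hintμ, hintν, ?_, ?_⟩
      · rw [integral_add ihμ ((integrable_hinge' hμ t).const_mul c),
          integral_add ihν ((integrable_hinge' hν t).const_mul c),
          integral_const_mul, integral_const_mul]
        have h4 := hinge_le' hμ hν hpot hmean t
        nlinarith
      · intro x hx
        have hqx : p m ≤ x := hqr.trans hx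
        have htx : t ≤ x := ht2.trans hx
        have h5 := hcrossT x
        show envl φ p m x + c * max (x - t) 0 = tangent φ (p (m+1)) x
        rw [ihtail x hqx, max_eq_left (by linarith)]
        linarith

end Key

section Approx

noncomputable def gridPt (n k : ℕ) : ℝ := (k : ℝ) / 2 ^ n - n

lemma gridPt_mono (n : ℕ) : Monotone (gridPt n) := by
  intro a b hab
  unfold gridPt
  have h : (a:ℝ) ≤ b := Nat.cast_le.mpr hab
  have h2 : (0:ℝ) < 2 ^ n := by positivity
  gcongr

noncomputable def approx (φ : ℝ → ℝ) (n : ℕ) (x : ℝ) : ℝ :=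
  envl φ (gridPt n) (n * 2 ^ (n+1)) x

lemma approx_le {φ : ℝ → ℝ} (hφ : ConvexOn ℝ Set.univ φ) (n : ℕ) (x : ℝ) :
    approx φ n x ≤ φ x :=
  envl_le hφ _ _ x

lemma gridPt_succ_eq (n k : ℕ) : gridPt (n+1) (2*k + 2^(n+1)) = gridPt n k := by
  unfold gridPt
  have h2 : (0:ℝ) < 2 ^ n := by positivity
  push_cast
  field_simp
  ring

lemma approx_mono (φ : ℝ → ℝ) (x : ℝ) : Monotone fun n => approx φ n x := by
  apply monotone_nat_of_le_succ
  intro n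
  unfold approx envl
  refine Finset.sup'_le _ _ fun k hk => ?_
  have hk' : k ≤ n * 2^(n+1) := Nat.lt_succ_iff.mp (Finset.mem_range.mp hk)
  have hb : 2*k + 2^(n+1) ≤ (n+1) * 2^(n+2) := by
    calc 2*k + 2^(n+1) ≤ 2*(n*2^(n+1)) + 2^(n+1) :=
          Nat.add_le_add_right (Nat.mul_le_mul_left 2 hk') _
      _ ≤ 2*(n*2^(n+1)) + 2*2^(n+1) :=
          Nat.add_le_add_left (Nat.le_mul_of_pos_left _ (by norm_num)) _
      _ = (n+1)*2^(n+2) := by ring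
  have := le_envl φ (gridPt (n+1)) (k := 2*k + 2^(n+1)) (m := (n+1) * 2^(n+2)) hb x
  rw [gridPt_succ_eq n k] at this
  exact this

end Approx

section Conv

lemma approx_tendsto {φ : ℝ → ℝ} (hφ : ConvexOn ℝ Set.univ φ) (x : ℝ) :
    Tendsto (fun n => approx φ n x) atTop (𝓝 (φ x)) := by
  have hcont : Continuous φ := continuousOn_univ.mp (hφ.continuousOn isOpen_univ)
  set pn : ℕ → ℝ := fun n => gridPt n ⌈(x + n) * 2^n⌉₊ with hpn
  -- basic estimates, valid for n ≥ |x|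
  have key : ∀ n : ℕ, |x| ≤ n →
      x ≤ pn n ∧ pn n ≤ x + (1/2)^n ∧ ⌈(x + n) * 2^n⌉₊ ≤ n * 2^(n+1) := by
    intro n hn
    have h2 : (0:ℝ) < 2^n := by positivity
    have hxn : (0:ℝ) ≤ x + n := by have := neg_abs_le x; linarith
    have h3 : (1/2:ℝ)^n * 2^n = 1 := by rw [← mul_pow]; norm_num
    refine ⟨?_, ?_, ?_⟩
    · have h4 := Nat.le_ceil ((x + n) * 2^n)
      show x ≤ (⌈(x + n) * 2^n⌉₊ : ℝ) / 2 ^ n - n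
      rw [le_sub_iff_add_le, le_div_iff₀ h2]
      exact h4
    · have h4 : (⌈(x + n) * 2^n⌉₊ : ℝ) < (x + n) * 2^n + 1 := Nat.ceil_lt_add_one (mul_nonneg hxn h2.le)
      show (⌈(x + n) * 2^n⌉₊ : ℝ) / 2 ^ n - n ≤ x + (1/2)^n
      rw [sub_le_iff_le_add, div_le_iff₀ h2]
      nlinarith [h4, h3]
    · refine Nat.ceil_le.mpr ?_
      push_cast
      have hx2 : x ≤ n := (le_abs_self x).trans hn
      have : (x + n) * 2^n ≤ (2 * n) * 2^n := by nlinarith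
      calc (x + n) * 2^n ≤ (2 * n) * 2^n := this
        _ = n * 2^(n+1) := by ring
  have hev : ∀ᶠ n : ℕ in atTop, |x| ≤ n := by
    obtain ⟨N, hN⟩ := exists_nat_ge |x|
    filter_upwards [eventually_ge_atTop N] with n hn
    exact hN.trans (Nat.cast_le.mpr hn)
  have hhalf : Tendsto (fun n : ℕ => (1/2:ℝ)^n) atTop (𝓝 0) :=
    tendsto_pow_atTop_nhds_zero_of_lt_one (by norm_num) (by norm_num)
  -- pn n → x
  have hpnt : Tendsto pn atTop (𝓝 x) := by
    refine tendsto_of_tendsto_of_tendsto_of_le_of_le' (tendsto_const_nhds)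
      (by simpa using tendsto_const_nhds.add hhalf : Tendsto (fun n : ℕ => x + (1/2)^n) atTop (𝓝 x))
      ?_ ?_
    · filter_upwards [hev] with n hn; exact (key n hn).1
    · filter_upwards [hev] with n hn; exact (key n hn).2.1
  -- tangent values at x tend to φ x
  have htan : Tendsto (fun n => tangent φ (pn n) x) atTop (𝓝 (φ x)) := by
    have part1 : Tendsto (fun n => φ (pn n)) atTop (𝓝 (φ x)) :=
      (hcont.continuousAt.tendsto).comp hpnt
    have part2 : Tendsto (fun n => subSlope φ (pn n) * (x - pn n)) atTop (𝓝 0) := by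
      set C := max |subSlope φ x| |subSlope φ (x+1)| with hC
      have hCg : Tendsto (fun n : ℕ => C * (1/2:ℝ)^n) atTop (𝓝 0) := by
        have h := hhalf.const_mul C
        rwa [mul_zero] at h
      refine squeeze_zero_norm' ?_ hCg
      have hev1 : ∀ᶠ n : ℕ in atTop, (1/2:ℝ)^n ≤ 1 := by
        refine Eventually.of_forall fun n => ?_
        exact pow_le_one₀ (by norm_num) (by norm_num)
      filter_upwards [hev, hev1] with n hn hn1
      have h1 := (key n hn).1
      have h2 := (key n hn).2.1
      have hup : pn n ≤ x + 1 := by linarith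
      have hs1 : subSlope φ x ≤ subSlope φ (pn n) := subSlope_mono hφ h1
      have hs2 : subSlope φ (pn n) ≤ subSlope φ (x+1) := subSlope_mono hφ hup
      have habs : |subSlope φ (pn n)| ≤ C := by
        rw [abs_le]
        constructor
        · have := neg_abs_le (subSlope φ x); have := le_max_left |subSlope φ x| |subSlope φ (x+1)|
          simp only [hC]; linarith
        · have := le_abs_self (subSlope φ (x+1)); have := le_max_right |subSlope φ x| |subSlope φ (x+1)|
          simp only [hC]; linarith
      have hdist : |x - pn n| ≤ (1/2)^n := by
        rw [abs_le]; constructor <;> linarith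
      calc ‖subSlope φ (pn n) * (x - pn n)‖ = |subSlope φ (pn n)| * |x - pn n| := by
            rw [Real.norm_eq_abs, abs_mul]
        _ ≤ C * (1/2)^n := by
            refine mul_le_mul habs hdist (abs_nonneg _) ?_
            exact (abs_nonneg _).trans habs
    have : Tendsto (fun n => φ (pn n) + subSlope φ (pn n) * (x - pn n)) atTop (𝓝 (φ x + 0)) :=
      part1.add part2
    simpa [tangent] using this
  -- squeeze
  refine tendsto_of_tendsto_of_tendsto_of_le_of_le' htan tendsto_const_nhds ?_ ?_
  · filter_upwards [hev] with n hn
    exact le_envl φ (gridPt n) (key n hn).2.2 x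
  · exact Eventually.of_forall fun n => approx_le hφ n x

end Conv


/-- for probability measures with finite first moments, `μ ≤_cx ν` iff
`u_μ ≤ u_ν` pointwise and the means agree. -/
theorem convexOrder_iff_potential_le_and_mean_eq (μ ν : Measure ℝ)
    [IsProbabilityMeasure μ] [IsProbabilityMeasure ν]
    (hμ : Integrable (fun x => |x|) μ) (hν : Integrable (fun x => |x|) ν) :
    ConvexOrder μ ν ↔
      ((∀ y : ℝ, potential μ y ≤ potential ν y) ∧ ∫ x, x ∂μ = ∫ x, x ∂ν) := by
  constructor
  · intro h
    constructor
    · intro y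
      have hconv : ConvexOn ℝ Set.univ (fun x => |y - x|) := by
        refine ⟨convex_univ, fun a _ b _ s t hs ht hst => ?_⟩
        simp only [smul_eq_mul]
        have hid : y - (s * a + t * b) = s * (y - a) + t * (y - b) := by
          linear_combination (-y) * hst
        rw [hid]
        calc |s * (y - a) + t * (y - b)| ≤ |s * (y - a)| + |t * (y - b)| := abs_add_le _ _
          _ = s * |y - a| + t * |y - b| := by
              rw [abs_mul, abs_mul, abs_of_nonneg hs, abs_of_nonneg ht]
      have hμint : Integrable (fun x => |y - x|) μ :=
        (integrable_abs_sub' hμ y).congr (ae_of_all _ fun x => abs_sub_comm x y)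
      have hνint : Integrable (fun x => |y - x|) ν :=
        (integrable_abs_sub' hν y).congr (ae_of_all _ fun x => abs_sub_comm x y)
      exact h _ hconv hμint hνint
    · have hneg : ConvexOn ℝ Set.univ (fun x : ℝ => -x) := by
        refine ⟨convex_univ, fun a _ b _ s t hs ht hst => le_of_eq ?_⟩
        simp only [smul_eq_mul]
        ring
      have h1 := h (fun x => x) (convexOn_id convex_univ) (integrable_id'' hμ) (integrable_id'' hν)
      have h2 := h (fun x => -x) hneg (integrable_id'' hμ).neg (integrable_id'' hν).neg
      rw [integral_neg, integral_neg] at h2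
      linarith
  · rintro ⟨hpot, hmean⟩ φ hφ hφμ hφν
    have key := fun n : ℕ =>
      envelope_key hμ hν hpot hmean hφ (gridPt n) (gridPt_mono n) (n * 2^(n+1))
    have hlim : Tendsto (fun n => ∫ x, approx φ n x ∂μ) atTop (𝓝 (∫ x, φ x ∂μ)) := by
      refine integral_tendsto_of_tendsto_of_monotone (fun n => (key n).1) hφμ ?_ ?_
      · exact ae_of_all _ fun x => approx_mono φ x
      · exact ae_of_all _ fun x => approx_tendsto hφ x
    refine le_of_tendsto hlim ?_
    refine Eventually.of_forall fun n => ?_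
    calc ∫ x, approx φ n x ∂μ ≤ ∫ x, approx φ n x ∂ν := (key n).2.2.1
      _ ≤ ∫ x, φ x ∂ν := integral_mono (key n).2.1 hφν fun x => approx_le hφ n x
end

section
/- Let x, y, z ∈ ℝ with y < x < z, and let (y_k, z_k) be a sequence in (−∞, x] × [x, +∞) such that for each k either y_k < x < z_k or y_k = x = z_k. Then the 1-Wasserstein distance W₁(B(x, y_k, z_k), B(x, y, z)) converges to 0 if and only if |y_k − y| + |z_k − z| converges to 0. -/
set_option maxHeartbeats 1000000


open MeasureTheory

/-- `π` is a coupling of `μ` and `ν`. -/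
def IsCoupling {X Y : Type*} [MeasurableSpace X] [MeasurableSpace Y]
    (π : Measure (X × Y)) (μ : Measure X) (ν : Measure Y) : Prop :=
  π.map Prod.fst = μ ∧ π.map Prod.snd = ν

/-- The 1-Wasserstein distance (as an extended nonnegative real): the infimum of the
transport cost `∫ |a - b| dπ` over couplings `π` of `μ` and `ν`. -/
noncomputable def W1 {X : Type*} [MeasurableSpace X] [PseudoEMetricSpace X]
    (μ ν : Measure X) : ENNReal :=
  ⨅ π ∈ {π : Measure (X × X) | IsCoupling π μ ν}, ∫⁻ q, edist q.1 q.2 ∂π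

/-- The two-point measure `B(x,l,r)` for `l < x < r`, and `δ_x` otherwise. -/
noncomputable def Bmeas (x l r : ℝ) : Measure ℝ :=
  if l < x ∧ x < r then
    ENNReal.ofReal ((r - x) / (r - l)) • Measure.dirac l +
      ENNReal.ofReal ((x - l) / (r - l)) • Measure.dirac r
  else Measure.dirac x

private lemma redist (a b : ℝ) : edist a b = ENNReal.ofReal |a - b| := by
  rw [edist_dist, Real.dist_eq]

private lemma lintegral_point_le (π : Measure (ℝ × ℝ)) (u t : ℝ) :
    ENNReal.ofReal |u - t| * π {(u, t)} ≤ ∫⁻ q, edist q.1 q.2 ∂π := by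
  have key : ENNReal.ofReal |u - t| * π {(u, t)} =
      ∫⁻ q, Set.indicator ({(u, t)} : Set (ℝ × ℝ)) (fun _ => ENNReal.ofReal |u - t|) q ∂π :=
    (lintegral_indicator_const (measurableSet_singleton _) _).symm
  rw [key]
  refine lintegral_mono fun q => ?_
  rcases eq_or_ne q (u, t) with rfl | hq
  · rw [Set.indicator_of_mem (Set.mem_singleton _)]
    simp [redist]
  · rw [Set.indicator_of_notMem (by simpa using hq)]
    simp

private lemma coupling_side (π : Measure (ℝ × ℝ)) (u v t m : ℝ) (hm : 0 ≤ m)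
    (hν : π (Set.univ ×ˢ {t}) = ENNReal.ofReal m)
    (hcon : π ((({u, v} : Set ℝ)ᶜ) ×ˢ Set.univ) = 0)
    (hC : ∫⁻ q, edist q.1 q.2 ∂π ≠ ⊤) :
    ∃ a c : ℝ, 0 ≤ a ∧ 0 ≤ c ∧ m ≤ a + c ∧
      a * |u - t| ≤ (∫⁻ q, edist q.1 q.2 ∂π).toReal ∧
      c * |v - t| ≤ (∫⁻ q, edist q.1 q.2 ∂π).toReal := by
  have hsub : ∀ w : ℝ, ({((w, t) : ℝ × ℝ)}) ⊆ Set.univ ×ˢ ({t} : Set ℝ) := by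
    intro w q hq
    rw [Set.mem_singleton_iff] at hq
    subst hq
    exact ⟨Set.mem_univ _, rfl⟩
  have hAfin : π {(u, t)} ≠ ⊤ :=
    ne_top_of_le_ne_top (by rw [hν]; exact ENNReal.ofReal_ne_top) (measure_mono (hsub u))
  have hBfin : π {(v, t)} ≠ ⊤ :=
    ne_top_of_le_ne_top (by rw [hν]; exact ENNReal.ofReal_ne_top) (measure_mono (hsub v))
  refine ⟨(π {(u, t)}).toReal, (π {(v, t)}).toReal,
    ENNReal.toReal_nonneg, ENNReal.toReal_nonneg, ?_, ?_, ?_⟩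
  · have hcover : (Set.univ ×ˢ ({t} : Set ℝ)) ⊆
        ({((u, t) : ℝ × ℝ)}) ∪ (({((v, t) : ℝ × ℝ)}) ∪ ((({u, v} : Set ℝ)ᶜ) ×ˢ Set.univ)) := by
      rintro ⟨s, t'⟩ ⟨-, ht⟩
      simp only [Set.mem_singleton_iff] at ht
      subst ht
      by_cases h1 : s = u
      · exact Or.inl (by simp [h1])
      by_cases h2 : s = v
      · exact Or.inr (Or.inl (by simp [h2]))
      · exact Or.inr (Or.inr ⟨by simp [h1, h2], Set.mem_univ _⟩)
    have hle : π (Set.univ ×ˢ ({t} : Set ℝ)) ≤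
        π {(u, t)} + (π {(v, t)} + π ((({u, v} : Set ℝ)ᶜ) ×ˢ Set.univ)) := by
      refine (measure_mono hcover).trans ?_
      refine (measure_union_le _ _).trans ?_
      exact add_le_add le_rfl (measure_union_le _ _)
    rw [hν, hcon, add_zero] at hle
    have h2 := ENNReal.toReal_mono (by simp [ENNReal.add_ne_top, hAfin, hBfin]) hle
    rwa [ENNReal.toReal_ofReal hm, ENNReal.toReal_add hAfin hBfin] at h2
  · have h := lintegral_point_le π u t
    have h2 := ENNReal.toReal_mono hC h
    rw [ENNReal.toReal_mul, ENNReal.toReal_ofReal (abs_nonneg _)] at h2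
    linarith
  · have h := lintegral_point_le π v t
    have h2 := ENNReal.toReal_mono hC h
    rw [ENNReal.toReal_mul, ENNReal.toReal_ofReal (abs_nonneg _)] at h2
    linarith

private lemma Bmeas_compl (x l r : ℝ)
    (halt : (l < x ∧ x < r) ∨ (l = x ∧ r = x)) :
    Bmeas x l r (({l, r} : Set ℝ)ᶜ) = 0 := by
  rcases halt with ⟨h1, h2⟩ | ⟨h1, h2⟩
  · rw [Bmeas, if_pos ⟨h1, h2⟩]
    simp [Measure.dirac_apply, Set.indicator]
  · rw [Bmeas, if_neg (by rintro ⟨h, -⟩; exact h.ne h1)]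
    simp [Measure.dirac_apply, Set.indicator, h1, h2]

private lemma W1_le_bound (x y z yk zk : ℝ) (hy : y < x) (hz : x < z)
    (hyk : yk < x) (hzk : x < zk) :
    W1 (Bmeas x yk zk) (Bmeas x y z) ≤
      ENNReal.ofReal (min ((zk - x) / (zk - yk)) ((z - x) / (z - y)) * |yk - y| +
        ((zk - x) / (zk - yk) - min ((zk - x) / (zk - yk)) ((z - x) / (z - y))) * |yk - z| +
        ((z - x) / (z - y) - min ((zk - x) / (zk - yk)) ((z - x) / (z - y))) * |zk - y| +
        min ((x - yk) / (zk - yk)) ((x - y) / (z - y)) * |zk - z|) := by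
  set pk := (zk - x) / (zk - yk) with hpkdef
  set p := (z - x) / (z - y) with hpdef
  set qk := (x - yk) / (zk - yk) with hqkdef
  set q := (x - y) / (z - y) with hqdef
  set a := min pk p with hadef
  set d := min qk q with hddef
  have hky : (0:ℝ) < zk - yk := by linarith
  have hzy : (0:ℝ) < z - y := by linarith
  have hpk0 : 0 ≤ pk := by rw [hpkdef]; exact div_nonneg (by linarith) (by linarith)
  have hp0 : 0 ≤ p := by rw [hpdef]; exact div_nonneg (by linarith) (by linarith)
  have hqk0 : 0 ≤ qk := by rw [hqkdef]; exact div_nonneg (by linarith) (by linarith)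
  have hq0 : 0 ≤ q := by rw [hqdef]; exact div_nonneg (by linarith) (by linarith)
  have ha0 : 0 ≤ a := le_min hpk0 hp0
  have hb0 : 0 ≤ pk - a := by simp [hadef, min_le_left]
  have hc0 : 0 ≤ p - a := by simp [hadef, min_le_right]
  have hd0 : 0 ≤ d := le_min hqk0 hq0
  have hpqk : pk + qk = 1 := by
    rw [hpkdef, hqkdef, ← add_div, div_eq_one_iff_eq hky.ne']; ring
  have hpq : p + q = 1 := by
    rw [hpdef, hqdef, ← add_div, div_eq_one_iff_eq hzy.ne']; ring
  have hcd : (p - a) + d = qk := by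
    rcases le_total pk p with h | h
    · have h1 : a = pk := min_eq_left h
      have h2 : d = q := min_eq_right (by linarith)
      rw [h1, h2]; linarith
    · have h1 : a = p := min_eq_right h
      have h2 : d = qk := min_eq_left (by linarith)
      rw [h1, h2]; linarith
  have hbd : (pk - a) + d = q := by
    rcases le_total pk p with h | h
    · have h1 : a = pk := min_eq_left h
      have h2 : d = q := min_eq_right (by linarith)
      rw [h1, h2]; linarith
    · have h1 : a = p := min_eq_right h
      have h2 : d = qk := min_eq_left (by linarith)
      rw [h1, h2]; linarith
  set π : Measure (ℝ × ℝ) :=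
    ENNReal.ofReal a • Measure.dirac (yk, y) + ENNReal.ofReal (pk - a) • Measure.dirac (yk, z) +
      ENNReal.ofReal (p - a) • Measure.dirac (zk, y) + ENNReal.ofReal d • Measure.dirac (zk, z)
    with hπdef
  have hcoup : IsCoupling π (Bmeas x yk zk) (Bmeas x y z) := by
    constructor
    · rw [hπdef, Measure.map_add _ _ measurable_fst, Measure.map_add _ _ measurable_fst,
        Measure.map_add _ _ measurable_fst, Measure.map_smul, Measure.map_smul,
        Measure.map_smul, Measure.map_smul, Measure.map_dirac' measurable_fst,
        Measure.map_dirac' measurable_fst, Measure.map_dirac' measurable_fst,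
        Measure.map_dirac' measurable_fst]
      rw [Bmeas, if_pos ⟨hyk, hzk⟩]
      have e1 : ENNReal.ofReal pk = ENNReal.ofReal a + ENNReal.ofReal (pk - a) := by
        rw [← ENNReal.ofReal_add ha0 hb0]; congr 1; ring
      have e2 : ENNReal.ofReal qk = ENNReal.ofReal (p - a) + ENNReal.ofReal d := by
        rw [← ENNReal.ofReal_add hc0 hd0, hcd]
      rw [e1, e2, add_smul, add_smul]
      abel
    · rw [hπdef, Measure.map_add _ _ measurable_snd, Measure.map_add _ _ measurable_snd,
        Measure.map_add _ _ measurable_snd, Measure.map_smul, Measure.map_smul,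
        Measure.map_smul, Measure.map_smul, Measure.map_dirac' measurable_snd,
        Measure.map_dirac' measurable_snd, Measure.map_dirac' measurable_snd,
        Measure.map_dirac' measurable_snd]
      rw [Bmeas, if_pos ⟨hy, hz⟩]
      have e1 : ENNReal.ofReal p = ENNReal.ofReal a + ENNReal.ofReal (p - a) := by
        rw [← ENNReal.ofReal_add ha0 hc0]; congr 1; ring
      have e2 : ENNReal.ofReal q = ENNReal.ofReal (pk - a) + ENNReal.ofReal d := by
        rw [← ENNReal.ofReal_add hb0 hd0, hbd]
      rw [e1, e2, add_smul, add_smul]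
      abel
  have hcost : ∫⁻ s, edist s.1 s.2 ∂π =
      ENNReal.ofReal (a * |yk - y| + (pk - a) * |yk - z| + (p - a) * |zk - y| + d * |zk - z|) := by
    rw [hπdef]
    rw [lintegral_add_measure, lintegral_add_measure, lintegral_add_measure,
      lintegral_smul_measure, lintegral_smul_measure, lintegral_smul_measure,
      lintegral_smul_measure, lintegral_dirac, lintegral_dirac, lintegral_dirac,
      lintegral_dirac]
    simp only [redist, smul_eq_mul]
    rw [← ENNReal.ofReal_mul ha0, ← ENNReal.ofReal_mul hb0, ← ENNReal.ofReal_mul hc0,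
      ← ENNReal.ofReal_mul hd0,
      ← ENNReal.ofReal_add (by positivity) (by positivity),
      ← ENNReal.ofReal_add (by positivity) (by positivity),
      ← ENNReal.ofReal_add (by positivity) (by positivity)]
  calc W1 (Bmeas x yk zk) (Bmeas x y z) ≤ ∫⁻ s, edist s.1 s.2 ∂π :=
        iInf₂_le π hcoup
    _ = _ := hcost

private lemma arith_side (ε δ p m A Cr a c : ℝ) (hε : 0 < ε) (hp : 0 < p) (hm : 0 < m)
    (hδ1 : δ ≤ p * m / 2) (hδ3 : δ ≤ ε * p / 5) (hCr : Cr < δ)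
    (ha0 : 0 ≤ a) (hc0 : 0 ≤ c) (hA : 0 ≤ A)
    (hac : p ≤ a + c) (hay : a * A ≤ Cr) (hcm : c * m ≤ Cr) : A < ε / 2 := by
  have hcs : c < p / 2 := by nlinarith
  have has : p / 2 < a := by linarith
  nlinarith [mul_le_mul_of_nonneg_right has.le hA]

/-- with `y < x < z` and `(y_k, z_k)` as described,
`W₁(B(x,y_k,z_k), B(x,y,z)) → 0` iff `|y_k − y| + |z_k − z| → 0`. -/
theorem tendsto_W1_Bmeas_iff (x y z : ℝ) (hy : y < x) (hz : x < z)
    (yk zk : ℕ → ℝ) (hyk : ∀ k, yk k ≤ x) (hzk : ∀ k, x ≤ zk k)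
    (halt : ∀ k, (yk k < x ∧ x < zk k) ∨ (yk k = x ∧ zk k = x)) :
    Filter.Tendsto (fun k => W1 (Bmeas x (yk k) (zk k)) (Bmeas x y z))
        Filter.atTop (nhds 0) ↔
      Filter.Tendsto (fun k => |yk k - y| + |zk k - z|) Filter.atTop (nhds 0) := by
  have hzy : (0:ℝ) < z - y := by linarith
  set p := (z - x) / (z - y) with hpdef
  set q := (x - y) / (z - y) with hqdef
  have hp : 0 < p := div_pos (by linarith) hzy
  have hq : 0 < q := div_pos (by linarith) hzy
  have hνy : Bmeas x y z {y} = ENNReal.ofReal p := by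
    rw [Bmeas, if_pos ⟨hy, hz⟩]
    have hne : z ≠ y := (hy.trans hz).ne'
    simp [Measure.dirac_apply, Set.indicator, hne, hpdef, hqdef]
  have hνz : Bmeas x y z {z} = ENNReal.ofReal q := by
    rw [Bmeas, if_pos ⟨hy, hz⟩]
    have hne : y ≠ z := (hy.trans hz).ne
    simp [Measure.dirac_apply, Set.indicator, hne, hpdef, hqdef]
  constructor
  · intro hW
    rw [Metric.tendsto_atTop]
    intro ε hε
    have hxy : (0:ℝ) < x - y := by linarith
    have hzx : (0:ℝ) < z - x := by linarith
    set δ := min (p * (x - y) / 2) (min (q * (z - x) / 2) (min (ε * p / 5) (ε * q / 5))) with hδdef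
    have hδ : 0 < δ := by
      have h1 : 0 < p * (x - y) / 2 := by nlinarith
      have h2 : 0 < q * (z - x) / 2 := by nlinarith
      have h3 : 0 < ε * p / 5 := by nlinarith
      have h4 : 0 < ε * q / 5 := by nlinarith
      exact lt_min h1 (lt_min h2 (lt_min h3 h4))
    have hδ1 : δ ≤ p * (x - y) / 2 := min_le_left _ _
    have hδ2 : δ ≤ q * (z - x) / 2 := (min_le_right _ _).trans (min_le_left _ _)
    have hδ3 : δ ≤ ε * p / 5 := (min_le_right _ _).trans ((min_le_right _ _).trans (min_le_left _ _))
    have hδ4 : δ ≤ ε * q / 5 := (min_le_right _ _).trans ((min_le_right _ _).trans (min_le_right _ _))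
    have hev := hW.eventually_lt_const (ENNReal.ofReal_pos.mpr hδ)
    obtain ⟨N, hN⟩ := Filter.eventually_atTop.mp hev
    refine ⟨N, fun n hn => ?_⟩
    have hlt := hN n hn
    rw [W1] at hlt
    simp only [iInf_lt_iff] at hlt
    obtain ⟨π, hπ, hcost⟩ := hlt
    simp only [Set.mem_setOf_eq] at hπ
    have hC : ∫⁻ s, edist s.1 s.2 ∂π ≠ ⊤ := ne_top_of_lt hcost
    have hCr : (∫⁻ s, edist s.1 s.2 ∂π).toReal < δ :=
      (ENNReal.lt_ofReal_iff_toReal_lt hC).mp hcost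
    -- marginal facts
    have hsndpre : ∀ t : ℝ, (Prod.snd ⁻¹' {t} : Set (ℝ × ℝ)) = Set.univ ×ˢ {t} := by
      intro t; ext ⟨a, b⟩; simp [eq_comm]
    have hmargy : π (Set.univ ×ˢ ({y} : Set ℝ)) = ENNReal.ofReal p := by
      rw [← hsndpre, ← Measure.map_apply measurable_snd (measurableSet_singleton y), hπ.2, hνy]
    have hmargz : π (Set.univ ×ˢ ({z} : Set ℝ)) = ENNReal.ofReal q := by
      rw [← hsndpre, ← Measure.map_apply measurable_snd (measurableSet_singleton z), hπ.2, hνz]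
    have hfstpre : (Prod.fst ⁻¹' (({yk n, zk n} : Set ℝ)ᶜ) : Set (ℝ × ℝ)) =
        (({yk n, zk n} : Set ℝ)ᶜ) ×ˢ Set.univ := by
      ext ⟨a, b⟩; simp
    have hms : MeasurableSet (({yk n, zk n} : Set ℝ)ᶜ) :=
      ((measurableSet_singleton (zk n)).insert (yk n)).compl
    have hcon : π ((({yk n, zk n} : Set ℝ)ᶜ) ×ˢ Set.univ) = 0 := by
      rw [← hfstpre, ← Measure.map_apply measurable_fst hms, hπ.1]
      exact Bmeas_compl x (yk n) (zk n) (halt n)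
    have hcon' : π ((({zk n, yk n} : Set ℝ)ᶜ) ×ˢ Set.univ) = 0 := by
      rw [Set.pair_comm]; exact hcon
    obtain ⟨a, c, ha0, hc0, hac, hay, hcy⟩ :=
      coupling_side π (yk n) (zk n) y p hp.le hmargy hcon hC
    obtain ⟨d, b, hd0, hb0, hdb, hdz, hbz⟩ :=
      coupling_side π (zk n) (yk n) z q hq.le hmargz hcon' hC
    have hzy' : x - y ≤ |zk n - y| := by
      rw [abs_of_nonneg (by linarith [hzk n])]; linarith [hzk n]
    have hyz' : z - x ≤ |yk n - z| := by
      rw [abs_of_nonpos (by linarith [hyk n])]; linarith [hyk n]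
    have hcy2 : c * (x - y) ≤ (∫⁻ s, edist s.1 s.2 ∂π).toReal :=
      le_trans (mul_le_mul_of_nonneg_left hzy' hc0) hcy
    have hbz2 : b * (z - x) ≤ (∫⁻ s, edist s.1 s.2 ∂π).toReal :=
      le_trans (mul_le_mul_of_nonneg_left hyz' hb0) hbz
    have h1 : |yk n - y| < ε / 2 :=
      arith_side ε δ p (x - y) _ _ a c hε hp hxy hδ1 hδ3 hCr ha0 hc0 (abs_nonneg _) hac hay hcy2
    have h2 : |zk n - z| < ε / 2 :=
      arith_side ε δ q (z - x) _ _ d b hε hq hzx hδ2 hδ4 hCr hd0 hb0 (abs_nonneg _) hdb hdz hbz2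
    rw [Real.dist_eq, sub_zero, abs_of_nonneg (by positivity)]
    linarith
  · intro hS
    have hyabs : Filter.Tendsto (fun k => |yk k - y|) Filter.atTop (nhds 0) :=
      squeeze_zero (fun k => abs_nonneg _) (fun k => le_add_of_nonneg_right (abs_nonneg _)) hS
    have hzabs : Filter.Tendsto (fun k => |zk k - z|) Filter.atTop (nhds 0) :=
      squeeze_zero (fun k => abs_nonneg _) (fun k => le_add_of_nonneg_left (abs_nonneg _)) hS
    have hyt : Filter.Tendsto (fun k => yk k) Filter.atTop (nhds y) := by
      rw [← tendsto_sub_nhds_zero_iff]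
      exact (tendsto_zero_iff_abs_tendsto_zero _).mpr hyabs
    have hzt : Filter.Tendsto (fun k => zk k) Filter.atTop (nhds z) := by
      rw [← tendsto_sub_nhds_zero_iff]
      exact (tendsto_zero_iff_abs_tendsto_zero _).mpr hzabs
    have hne0 : z - y ≠ 0 := hzy.ne'
    have hpk : Filter.Tendsto (fun k => (zk k - x) / (zk k - yk k)) Filter.atTop
        (nhds ((z - x) / (z - y))) :=
      (hzt.sub tendsto_const_nhds).div (hzt.sub hyt) hne0
    have hqk : Filter.Tendsto (fun k => (x - yk k) / (zk k - yk k)) Filter.atTop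
        (nhds ((x - y) / (z - y))) :=
      (tendsto_const_nhds.sub hyt).div (hzt.sub hyt) hne0
    set Bd : ℕ → ℝ := fun k =>
      min ((zk k - x) / (zk k - yk k)) ((z - x) / (z - y)) * |yk k - y| +
        ((zk k - x) / (zk k - yk k) - min ((zk k - x) / (zk k - yk k)) ((z - x) / (z - y))) * |yk k - z| +
        ((z - x) / (z - y) - min ((zk k - x) / (zk k - yk k)) ((z - x) / (z - y))) * |zk k - y| +
        min ((x - yk k) / (zk k - yk k)) ((x - y) / (z - y)) * |zk k - z| with hBddef
    have hBd : Filter.Tendsto Bd Filter.atTop (nhds 0) := by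
      have hmin : Filter.Tendsto (fun k => min ((zk k - x) / (zk k - yk k)) ((z - x) / (z - y)))
          Filter.atTop (nhds (min ((z - x) / (z - y)) ((z - x) / (z - y)))) :=
        hpk.min tendsto_const_nhds
      have hmin2 : Filter.Tendsto (fun k => min ((x - yk k) / (zk k - yk k)) ((x - y) / (z - y)))
          Filter.atTop (nhds (min ((x - y) / (z - y)) ((x - y) / (z - y)))) :=
        hqk.min tendsto_const_nhds
      have h1 := hmin.mul hyabs
      have h2 := (hpk.sub hmin).mul ((hyt.sub (tendsto_const_nhds (x := z))).abs)
      have h3 := ((tendsto_const_nhds (x := (z - x) / (z - y))).sub hmin).mul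
        ((hzt.sub (tendsto_const_nhds (x := y))).abs)
      have h4 := hmin2.mul hzabs
      have hsum := ((h1.add h2).add h3).add h4
      rw [hBddef]
      simpa using hsum
    have hev : ∀ᶠ k in Filter.atTop,
        W1 (Bmeas x (yk k) (zk k)) (Bmeas x y z) ≤ ENNReal.ofReal (Bd k) := by
      have hsmall := hS.eventually_lt_const
        (show (0:ℝ) < min (x - y) (z - x) from lt_min (by linarith) (by linarith))
      filter_upwards [hsmall] with k hk
      have hk1 : |yk k - y| < x - y :=
        lt_of_le_of_lt (le_add_of_nonneg_right (abs_nonneg _)) (hk.trans_le (min_le_left _ _))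
      have hk2 : |zk k - z| < z - x :=
        lt_of_le_of_lt (le_add_of_nonneg_left (abs_nonneg _)) (hk.trans_le (min_le_right _ _))
      have hky : yk k < x := by
        have := le_abs_self (yk k - y); linarith
      have hkz : x < zk k := by
        have := neg_abs_le (zk k - z); linarith
      exact W1_le_bound x y z (yk k) (zk k) hy hz hky hkz
    have hup : Filter.Tendsto (fun k => ENNReal.ofReal (Bd k)) Filter.atTop (nhds 0) := by
      have := ENNReal.tendsto_ofReal hBd
      simpa using this
    exact tendsto_of_tendsto_of_tendsto_of_le_of_le' tendsto_const_nhds hup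
      (Filter.Eventually.of_forall fun k => zero_le) hev
end

section
/- Let x ∈ ℝ and let (y_k, z_k) be a sequence with y_k ≤ x ≤ z_k such that for each k either y_k < x < z_k or y_k = x = z_k. Then W₁(B(x, y_k, z_k), δ_x) → 0 if and only if min(z_k − x, x − y_k) → 0. Moreover, for every k with y_k < x < z_k one has (z_k − x) ∧ (x − y_k) ≤ W₁(B(x, y_k, z_k), δ_x) ≤ 2·((z_k − x) ∧ (x − y_k)). -/
open MeasureTheory

lemma W1_dirac_eq (μ : Measure ℝ) (hμ : μ Set.univ = 1) (x : ℝ) :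
    W1 μ (Measure.dirac x) = ∫⁻ a, edist a x ∂μ := by
  have hm : Measurable (fun a : ℝ => (a, x)) := measurable_id.prodMk measurable_const
  unfold W1
  apply le_antisymm
  · have hc : IsCoupling (μ.map (fun a => (a, x))) μ (Measure.dirac x) := by
      constructor
      · rw [Measure.map_map measurable_fst hm]
        exact Measure.map_id'
      · rw [Measure.map_map measurable_snd hm]
        show μ.map (fun _ => x) = _
        rw [Measure.map_const, hμ, one_smul]
    refine le_trans (iInf₂_le (μ.map (fun a => (a, x))) hc) ?_
    rw [lintegral_map measurable_edist hm]
  · refine le_iInf₂ fun π hπ => le_of_eq ?_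
    have hae : ∀ᵐ q ∂π, q.2 = x := by
      have h : π (Prod.snd ⁻¹' {x}ᶜ) = 0 := by
        have h := Measure.map_apply (μ := π) measurable_snd
          ((measurableSet_singleton x).compl)
        rw [hπ.2] at h
        simpa using h.symm
      exact ae_iff.mpr h
    calc ∫⁻ a, edist a x ∂μ = ∫⁻ q : ℝ × ℝ, edist q.1 x ∂π := by
          rw [← hπ.1, lintegral_map (by fun_prop) measurable_fst]
      _ = ∫⁻ q, edist q.1 q.2 ∂π :=
          lintegral_congr_ae (by filter_upwards [hae] with q hq; rw [hq])

lemma W1_Bmeas_eq (x l r : ℝ) (hl : l < x) (hr : x < r) :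
    W1 (Bmeas x l r) (Measure.dirac x) = ENNReal.ofReal (2 * (r - x) * (x - l) / (r - l)) := by
  have hrl : (0:ℝ) < r - l := by linarith
  have h1 : (0:ℝ) ≤ (r - x) / (r - l) := div_nonneg (by linarith) (by linarith)
  have h2 : (0:ℝ) ≤ (x - l) / (r - l) := div_nonneg (by linarith) (by linarith)
  have huniv : Bmeas x l r Set.univ = 1 := by
    rw [Bmeas, if_pos ⟨hl, hr⟩]
    simp only [Measure.add_apply, Measure.smul_apply, Measure.dirac_apply_of_mem (Set.mem_univ _),
      smul_eq_mul, mul_one]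
    rw [← ENNReal.ofReal_add h1 h2, ← ENNReal.ofReal_one]
    congr 1
    field_simp
    ring
  rw [W1_dirac_eq _ huniv]
  rw [Bmeas, if_pos ⟨hl, hr⟩]
  rw [lintegral_add_measure, lintegral_smul_measure, lintegral_smul_measure,
    lintegral_dirac, lintegral_dirac]
  rw [edist_dist, edist_dist, Real.dist_eq, Real.dist_eq,
    abs_of_nonpos (by linarith), abs_of_nonneg (by linarith)]
  simp only [smul_eq_mul]
  rw [← ENNReal.ofReal_mul h1, ← ENNReal.ofReal_mul h2,
    ← ENNReal.ofReal_add (mul_nonneg h1 (by linarith)) (mul_nonneg h2 (by linarith))]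
  congr 1
  field_simp
  ring

lemma W1_dirac_self (x : ℝ) : W1 (Measure.dirac x) (Measure.dirac x) = 0 := by
  rw [W1_dirac_eq _ (by simp) x, lintegral_dirac]
  simp

lemma min_ineq (a b : ℝ) (ha : 0 < a) (hb : 0 < b) :
    min a b ≤ 2 * a * b / (a + b) ∧ 2 * a * b / (a + b) ≤ 2 * min a b := by
  have hab : (0:ℝ) < a + b := by linarith
  rcases le_total a b with h | h
  · rw [min_eq_left h]
    constructor
    · rw [le_div_iff₀ hab]; nlinarith
    · rw [div_le_iff₀ hab]; nlinarith
  · rw [min_eq_right h]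
    constructor
    · rw [le_div_iff₀ hab]; nlinarith
    · rw [div_le_iff₀ hab]; nlinarith


/-- `W₁(B(x,y_k,z_k), δ_x) → 0` iff `min(z_k − x, x − y_k) → 0`; moreover the
two-sided quantitative bound by `(z_k − x) ∧ (x − y_k)` holds whenever `y_k < x < z_k`. -/
theorem tendsto_W1_Bmeas_dirac_iff (x : ℝ) (yk zk : ℕ → ℝ)
    (hyk : ∀ k, yk k ≤ x) (hzk : ∀ k, x ≤ zk k)
    (halt : ∀ k, (yk k < x ∧ x < zk k) ∨ (yk k = x ∧ zk k = x)) :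
    (Filter.Tendsto (fun k => W1 (Bmeas x (yk k) (zk k)) (Measure.dirac x))
        Filter.atTop (nhds 0) ↔
      Filter.Tendsto (fun k => min (zk k - x) (x - yk k)) Filter.atTop (nhds 0)) ∧
    ∀ k, yk k < x → x < zk k →
      ENNReal.ofReal (min (zk k - x) (x - yk k)) ≤
          W1 (Bmeas x (yk k) (zk k)) (Measure.dirac x) ∧
        W1 (Bmeas x (yk k) (zk k)) (Measure.dirac x) ≤
          ENNReal.ofReal (2 * min (zk k - x) (x - yk k)) := by
  set g : ℕ → ℝ := fun k => min (zk k - x) (x - yk k) with hg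
  set f : ℕ → ENNReal := fun k => W1 (Bmeas x (yk k) (zk k)) (Measure.dirac x) with hf
  have hg0 : ∀ k, 0 ≤ g k := fun k => le_min (by linarith [hzk k]) (by linarith [hyk k])
  have key : ∀ k, ENNReal.ofReal (g k) ≤ f k ∧ f k ≤ ENNReal.ofReal (2 * g k) := by
    intro k
    rcases halt k with ⟨h1, h2⟩ | ⟨h1, h2⟩
    · have hfk : f k = ENNReal.ofReal (2 * (zk k - x) * (x - yk k) / (zk k - yk k)) := by
        simp only [hf]
        exact W1_Bmeas_eq x (yk k) (zk k) h1 h2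
      have habs : zk k - yk k = (zk k - x) + (x - yk k) := by ring
      have hi := min_ineq (zk k - x) (x - yk k) (by linarith) (by linarith)
      rw [← habs] at hi
      rw [hfk]
      exact ⟨ENNReal.ofReal_le_ofReal hi.1, ENNReal.ofReal_le_ofReal hi.2⟩
    · have hB : Bmeas x (yk k) (zk k) = Measure.dirac x := by
        rw [Bmeas, if_neg]
        rintro ⟨h, -⟩
        rw [h1] at h
        exact lt_irrefl _ h
      have hfk : f k = 0 := by
        simp only [hf]
        rw [hB]
        exact W1_dirac_self x
      have hgk : g k = 0 := by simp [hg, h1, h2]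
      rw [hfk, hgk]
      simp
  refine ⟨⟨fun h => ?_, fun h => ?_⟩, fun k _ _ => key k⟩
  · have h2 : Filter.Tendsto (fun k => ENNReal.ofReal (g k)) Filter.atTop (nhds 0) :=
      tendsto_of_tendsto_of_tendsto_of_le_of_le tendsto_const_nhds h
        (fun k => zero_le) (fun k => (key k).1)
    have h3 := (ENNReal.tendsto_toReal (by simp : (0:ENNReal) ≠ ⊤)).comp h2
    have heq : (fun k => (ENNReal.ofReal (g k)).toReal) = g :=
      funext fun k => ENNReal.toReal_ofReal (hg0 k)
    rw [show ENNReal.toReal ∘ (fun k => ENNReal.ofReal (g k)) = g from funext fun k => ENNReal.toReal_ofReal (hg0 k)] at h3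
    simpa using h3
  · have h1 : Filter.Tendsto (fun k => 2 * g k) Filter.atTop (nhds 0) := by
      simpa using h.const_mul 2
    have h2 : Filter.Tendsto (fun k => ENNReal.ofReal (2 * g k)) Filter.atTop (nhds 0) := by
      simpa using ENNReal.tendsto_ofReal h1
    exact tendsto_of_tendsto_of_tendsto_of_le_of_le tendsto_const_nhds h2
      (fun k => zero_le) (fun k => (key k).2)
end

section
/- Let p ≥ 1 and X a Polish metric space. Let (ρ_k) be a sequence of finite Borel measures on X with finite p-th moments that converges weakly to ρ with ∫ d(x,x₀)^p dρ_k → ∫ d(x,x₀)^p dρ for some x₀. Let (q_k) be a sequence of Borel measures with q_k ≤ ρ_k (as measures) for every k, converging weakly to q. Then ∫ d(x,x₀)^p dq_k → ∫ d(x,x₀)^p dq. -/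
open MeasureTheory
open Filter Topology


noncomputable def truncFn {X : Type*} [MetricSpace X] (g : X → ℝ) (hg : Continuous g)
    (hnn : ∀ x, 0 ≤ g x) (n : ℕ) : BoundedContinuousFunction X ℝ :=
  BoundedContinuousFunction.mkOfBound ⟨fun x => min (g x) n, hg.min continuous_const⟩ n
    (by
      intro x y
      simp only [ContinuousMap.coe_mk]
      rw [Real.dist_eq, abs_sub_le_iff]
      constructor
      · have h1 : min (g x) (n:ℝ) ≤ n := min_le_right _ _
        have h2 : (0:ℝ) ≤ min (g y) n := le_min (hnn y) (Nat.cast_nonneg n)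
        linarith
      · have h1 : min (g y) (n:ℝ) ≤ n := min_le_right _ _
        have h2 : (0:ℝ) ≤ min (g x) n := le_min (hnn x) (Nat.cast_nonneg n)
        linarith)

@[simp] lemma truncFn_apply {X : Type*} [MetricSpace X] (g : X → ℝ) (hg : Continuous g)
    (hnn : ∀ x, 0 ≤ g x) (n : ℕ) (x : X) : truncFn g hg hnn n x = min (g x) n := rfl

lemma tendsto_integral_trunc {X : Type*} [MetricSpace X] [MeasurableSpace X] [BorelSpace X]
    (μ : Measure X) (g : X → ℝ) (hg : Continuous g) (hnn : ∀ x, 0 ≤ g x)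
    (hint : Integrable g μ) :
    Tendsto (fun n : ℕ => ∫ x, min (g x) (n:ℝ) ∂μ) atTop (𝓝 (∫ x, g x ∂μ)) := by
  apply tendsto_integral_of_dominated_convergence g
    (fun n => (hg.min continuous_const).aestronglyMeasurable) hint
  · intro n
    filter_upwards with x
    rw [Real.norm_eq_abs, abs_of_nonneg (le_min (hnn x) (Nat.cast_nonneg n))]
    exact min_le_left _ _
  · filter_upwards with x
    apply tendsto_atTop_of_eventually_const (i₀ := ⌈g x⌉₊)
    intro n hn
    exact min_eq_left (le_trans (Nat.le_ceil _) (Nat.cast_le.2 hn))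

/-- if `ρ_k → ρ` weakly with convergence of `p`-th moments, and `q_k ≤ ρ_k`
converge weakly to `q`, then the `p`-th moments of `q_k` converge to that of `q`. -/
theorem convergence_dominated (p : ℝ) (hp : 1 ≤ p)
    {X : Type*} [MetricSpace X] [TopologicalSpace.SeparableSpace X] [CompleteSpace X]
    [MeasurableSpace X] [BorelSpace X] (x₀ : X)
    (ρk : ℕ → Measure X) (hfin : ∀ k, IsFiniteMeasure (ρk k))
    (hmomk : ∀ k, (∫⁻ x, edist x x₀ ^ p ∂(ρk k)) < ⊤)
    (ρ : Measure X) [IsFiniteMeasure ρ] (hmom : (∫⁻ x, edist x x₀ ^ p ∂ρ) < ⊤)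
    (hweak : ∀ f : BoundedContinuousFunction X ℝ,
      Filter.Tendsto (fun k => ∫ x, f x ∂(ρk k)) Filter.atTop (nhds (∫ x, f x ∂ρ)))
    (hmomconv : Filter.Tendsto (fun k => ∫ x, dist x x₀ ^ p ∂(ρk k)) Filter.atTop
      (nhds (∫ x, dist x x₀ ^ p ∂ρ)))
    (qk : ℕ → Measure X) (hle : ∀ k, qk k ≤ ρk k)
    (q : Measure X)
    (hqweak : ∀ f : BoundedContinuousFunction X ℝ,
      Filter.Tendsto (fun k => ∫ x, f x ∂(qk k)) Filter.atTop (nhds (∫ x, f x ∂q))) :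
    Filter.Tendsto (fun k => ∫ x, dist x x₀ ^ p ∂(qk k)) Filter.atTop
      (nhds (∫ x, dist x x₀ ^ p ∂q)) := by
  set g : X → ℝ := fun x => dist x x₀ ^ p with hgdef
  have hg_cont : Continuous g :=
    (continuous_id.dist continuous_const).rpow_const (fun x => Or.inr (by linarith))
  have hg_nn : ∀ x, 0 ≤ g x := fun x => Real.rpow_nonneg dist_nonneg p
  -- bridge between lintegral of ofReal ∘ g and edist ^ p
  have hlint : ∀ (μ : Measure X),
      ∫⁻ x, ENNReal.ofReal (g x) ∂μ = ∫⁻ x, edist x x₀ ^ p ∂μ := by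
    intro μ
    refine lintegral_congr fun x => ?_
    rw [edist_dist]
    have hd : (0:ℝ) ≤ dist x x₀ := dist_nonneg
    have hp0 : (0:ℝ) ≤ p := by linarith
    exact (ENNReal.ofReal_rpow_of_nonneg hd hp0).symm
  have hint_of : ∀ (μ : Measure X), (∫⁻ x, edist x x₀ ^ p ∂μ) < ⊤ → Integrable g μ := by
    intro μ h
    refine ⟨hg_cont.aestronglyMeasurable, ?_⟩
    rw [hasFiniteIntegral_iff_ofReal (Eventually.of_forall hg_nn), hlint μ]
    exact h
  have hint_ρk : ∀ k, Integrable g (ρk k) := fun k => hint_of _ (hmomk k)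
  have hint_ρ : Integrable g ρ := hint_of _ hmom
  have hint_qk : ∀ k, Integrable g (qk k) := by
    intro k
    refine hint_of _ (lt_of_le_of_lt ?_ (hmomk k))
    exact lintegral_mono' (hle k) le_rfl
  have hint_min : ∀ (μ : Measure X), Integrable g μ → ∀ n : ℕ,
      Integrable (fun x => min (g x) (n:ℝ)) μ := by
    intro μ h n
    refine h.mono (hg_cont.min continuous_const).aestronglyMeasurable ?_
    filter_upwards with x
    rw [Real.norm_eq_abs, Real.norm_eq_abs, abs_of_nonneg (hg_nn x),
      abs_of_nonneg (le_min (hg_nn x) (Nat.cast_nonneg n))]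
    exact min_le_left _ _
  -- weak convergence applied to the truncations
  have F1 : ∀ n : ℕ, Tendsto (fun k => ∫ x, min (g x) (n:ℝ) ∂(qk k)) atTop
      (𝓝 (∫ x, min (g x) (n:ℝ) ∂q)) := by
    intro n
    simpa using hqweak (truncFn g hg_cont hg_nn n)
  have F1ρ : ∀ n : ℕ, Tendsto (fun k => ∫ x, min (g x) (n:ℝ) ∂(ρk k)) atTop
      (𝓝 (∫ x, min (g x) (n:ℝ) ∂ρ)) := by
    intro n
    simpa using hweak (truncFn g hg_cont hg_nn n)
  -- monotonicity facts
  have F2b : ∀ (n k : ℕ), ∫ x, min (g x) (n:ℝ) ∂(qk k) ≤ ∫ x, g x ∂(qk k) := by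
    intro n k
    exact integral_mono (hint_min _ (hint_qk k) n) (hint_qk k) fun x => min_le_left _ _
  have Fqρ : ∀ k, ∫ x, g x ∂(qk k) ≤ ∫ x, g x ∂(ρk k) := by
    intro k
    exact integral_mono_measure (hle k) (Eventually.of_forall hg_nn) (hint_ρk k)
  have F2 : ∀ (n k : ℕ), ∫ x, g x ∂(qk k) - ∫ x, min (g x) (n:ℝ) ∂(qk k) ≤
      ∫ x, g x ∂(ρk k) - ∫ x, min (g x) (n:ℝ) ∂(ρk k) := by
    intro n k
    rw [← integral_sub (hint_qk k) (hint_min _ (hint_qk k) n),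
      ← integral_sub (hint_ρk k) (hint_min _ (hint_ρk k) n)]
    refine integral_mono_measure (hle k) ?_ ((hint_ρk k).sub (hint_min _ (hint_ρk k) n))
    filter_upwards with x
    exact sub_nonneg.2 (min_le_left _ _)
  -- tail of ρ goes to zero
  have F4 : Tendsto (fun n : ℕ => ∫ x, g x ∂ρ - ∫ x, min (g x) (n:ℝ) ∂ρ) atTop (𝓝 0) := by
    have hcst : Tendsto (fun _ : ℕ => ∫ x, g x ∂ρ) atTop (𝓝 (∫ x, g x ∂ρ)) :=
      tendsto_const_nhds
    simpa using hcst.sub (tendsto_integral_trunc ρ g hg_cont hg_nn hint_ρ)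
  -- truncated moments of q tend to the moment of q
  have F5 : Tendsto (fun n : ℕ => ∫ x, min (g x) (n:ℝ) ∂q) atTop (𝓝 (∫ x, g x ∂q)) := by
    by_cases hI : Integrable g q
    · exact tendsto_integral_trunc q g hg_cont hg_nn hI
    · rw [integral_undef hI]
      -- find a truncation that is not integrable
      have hnint : ∃ n₀ : ℕ, ¬ Integrable (fun x => min (g x) ((n₀:ℕ):ℝ)) q := by
        by_contra hall
        push_neg at hall
        have htop : ∫⁻ x, ENNReal.ofReal (g x) ∂q = ⊤ := by
          have : ¬ HasFiniteIntegral g q := fun h => hI ⟨hg_cont.aestronglyMeasurable, h⟩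
          rw [hasFiniteIntegral_iff_ofReal (Eventually.of_forall hg_nn)] at this
          exact top_le_iff.mp (not_lt.mp this)
        have hmono : Monotone (fun n : ℕ => fun x => ENNReal.ofReal (min (g x) (n:ℝ))) := by
          intro m n hmn x
          exact ENNReal.ofReal_le_ofReal (min_le_min le_rfl (Nat.cast_le.2 hmn))
        have key : ∫⁻ x, ENNReal.ofReal (g x) ∂q =
            ⨆ n : ℕ, ∫⁻ x, ENNReal.ofReal (min (g x) (n:ℝ)) ∂q := by
          rw [← lintegral_iSup
            (fun n => (hg_cont.measurable.min measurable_const).ennreal_ofReal) hmono]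
          refine lintegral_congr fun x => ?_
          apply le_antisymm
          · refine le_trans ?_ (le_iSup _ ⌈g x⌉₊)
            rw [min_eq_left (le_trans (Nat.le_ceil _) le_rfl)]
          · exact iSup_le fun n => ENNReal.ofReal_le_ofReal (min_le_left _ _)
        -- each truncated integral is bounded by the limit moment of ρ
        have hbound : ∀ n : ℕ, ∫⁻ x, ENNReal.ofReal (min (g x) (n:ℝ)) ∂q ≤
            ENNReal.ofReal (∫ x, g x ∂ρ) := by
          intro n
          have hA : ∫ x, min (g x) (n:ℝ) ∂q ≤ ∫ x, g x ∂ρ := by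
            refine le_of_tendsto_of_tendsto' (F1 n) hmomconv fun k => ?_
            exact (F2b n k).trans (Fqρ k)
          calc ∫⁻ x, ENNReal.ofReal (min (g x) (n:ℝ)) ∂q
              = ENNReal.ofReal (∫ x, min (g x) (n:ℝ) ∂q) := by
                rw [ofReal_integral_eq_lintegral_ofReal (hall n)
                  (Eventually.of_forall fun x => le_min (hg_nn x) (Nat.cast_nonneg n))]
            _ ≤ ENNReal.ofReal (∫ x, g x ∂ρ) := ENNReal.ofReal_le_ofReal hA
        rw [key] at htop
        exact (ne_of_lt (lt_of_le_of_lt (iSup_le hbound) ENNReal.ofReal_lt_top)) htop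
      obtain ⟨n₀, hn₀⟩ := hnint
      apply tendsto_atTop_of_eventually_const (i₀ := n₀)
      intro n hn
      refine integral_undef fun h => hn₀ ?_
      refine h.mono (hg_cont.min continuous_const).aestronglyMeasurable ?_
      filter_upwards with x
      rw [Real.norm_eq_abs, Real.norm_eq_abs,
        abs_of_nonneg (le_min (hg_nn x) (Nat.cast_nonneg n)),
        abs_of_nonneg (le_min (hg_nn x) (Nat.cast_nonneg n₀))]
      exact min_le_min le_rfl (Nat.cast_le.2 hn)
  -- the tails along ρk converge to the tail along ρ
  have F3 : ∀ n : ℕ, Tendsto (fun k => ∫ x, g x ∂(ρk k) - ∫ x, min (g x) (n:ℝ) ∂(ρk k))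
      atTop (𝓝 (∫ x, g x ∂ρ - ∫ x, min (g x) (n:ℝ) ∂ρ)) :=
    fun n => hmomconv.sub (F1ρ n)
  -- final epsilon argument
  rw [Metric.tendsto_atTop]
  intro ε hε
  obtain ⟨N₁, hN₁⟩ := Metric.tendsto_atTop.mp F4 (ε/4) (by linarith)
  obtain ⟨N₂, hN₂⟩ := Metric.tendsto_atTop.mp F5 (ε/4) (by linarith)
  set n : ℕ := max N₁ N₂ with hndef
  have hc : |∫ x, g x ∂ρ - ∫ x, min (g x) (n:ℝ) ∂ρ| < ε/4 := by
    have := hN₁ n (le_max_left _ _)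
    rwa [Real.dist_eq, sub_zero] at this
  have hA : |∫ x, min (g x) (n:ℝ) ∂q - ∫ x, g x ∂q| < ε/4 := by
    have := hN₂ n (le_max_right _ _)
    rwa [Real.dist_eq] at this
  obtain ⟨K₁, hK₁⟩ := Metric.tendsto_atTop.mp (F1 n) (ε/4) (by linarith)
  obtain ⟨K₂, hK₂⟩ := Metric.tendsto_atTop.mp (F3 n) (ε/4) (by linarith)
  refine ⟨max K₁ K₂, fun k hk => ?_⟩
  have hk1 := hK₁ k (le_trans (le_max_left _ _) hk)
  have hk2 := hK₂ k (le_trans (le_max_right _ _) hk)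
  rw [Real.dist_eq] at hk1 hk2 ⊢
  set b := ∫ x, g x ∂(qk k)
  set a := ∫ x, min (g x) (n:ℝ) ∂(qk k)
  set A := ∫ x, min (g x) (n:ℝ) ∂q
  set T := ∫ x, g x ∂q
  have h1 : 0 ≤ b - a := sub_nonneg.2 (F2b n k)
  have h2 : b - a ≤ ∫ x, g x ∂(ρk k) - ∫ x, min (g x) (n:ℝ) ∂(ρk k) := F2 n k
  have h3 : |b - T| ≤ |b - a| + (|a - A| + |A - T|) :=
    le_trans (abs_sub_le b a T) (by gcongr; exact abs_sub_le a A T)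
  have h4 : |b - a| = b - a := abs_of_nonneg h1
  have h5 := abs_lt.mp hk2
  have h6 := abs_lt.mp hc
  linarith [h3, h2, hk1, hA, h4, h5.1, h5.2, h6.1, h6.2]
end

section
/- Let V and Z be Polish spaces, (θ_k) a sequence of probability measures on V converging in total variation to θ, and φ_k, φ : V → Z Borel measurable. If the push-forwards (id, φ_k)_# θ_k converge weakly to (id, φ)_# θ in P(V × Z), then φ_k → φ in θ-probability, i.e., for every ε > 0, θ({v : d_Z(φ_k(v), φ(v)) > ε}) → 0. -/
open MeasureTheory
open scoped ENNReal

lemma min_one_abs_sub (a b : ℝ) : |min 1 a - min 1 b| ≤ |a - b| := by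
  rcases min_cases 1 a with ⟨h1, h2⟩ | ⟨h1, h2⟩ <;>
  rcases min_cases 1 b with ⟨h3, h4⟩ | ⟨h3, h4⟩ <;>
  rw [h1, h3] <;> rw [abs_sub_le_iff] <;>
  constructor <;> rcases abs_cases (a - b) with ⟨h5, h6⟩ | ⟨h5, h6⟩ <;> linarith

noncomputable def graphIota {Z : Type*} [MetricSpace Z] (z : Z) :
    BoundedContinuousFunction Z ℝ :=
  BoundedContinuousFunction.mkOfBound
    ⟨fun w => min 1 (dist z w), by fun_prop⟩ 1 (by
      intro x y
      simp only [ContinuousMap.coe_mk]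
      rw [Real.dist_eq, abs_sub_le_iff]
      have hx : 0 ≤ min 1 (dist z x) := le_min zero_le_one dist_nonneg
      have hy : 0 ≤ min 1 (dist z y) := le_min zero_le_one dist_nonneg
      have hx1 : min 1 (dist z x) ≤ 1 := min_le_left _ _
      have hy1 : min 1 (dist z y) ≤ 1 := min_le_left _ _
      constructor <;> linarith)

lemma graphIota_apply {Z : Type*} [MetricSpace Z] (z w : Z) :
    graphIota z w = min 1 (dist z w) := rfl

lemma graphIota_lipschitz {Z : Type*} [MetricSpace Z] :
    LipschitzWith 1 (graphIota (Z := Z)) := by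
  apply LipschitzWith.of_dist_le_mul
  intro z z'
  rw [NNReal.coe_one, one_mul]
  rw [BoundedContinuousFunction.dist_le dist_nonneg]
  intro w
  rw [graphIota_apply, graphIota_apply, Real.dist_eq]
  exact le_trans (min_one_abs_sub _ _) (abs_dist_sub_le _ _ _)

lemma graphIota_lower {Z : Type*} [MetricSpace Z] (z z' : Z) :
    min 1 (dist z z') ≤ dist (graphIota z) (graphIota z') := by
  have h := BoundedContinuousFunction.dist_coe_le_dist (f := graphIota z)
    (g := graphIota z') z'
  rw [graphIota_apply, graphIota_apply, Real.dist_eq] at h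
  simpa [abs_of_nonneg (le_min zero_le_one dist_nonneg)] using h

lemma tv_step {V : Type*} [MeasurableSpace V] (μ ν : Measure V)
    [IsFiniteMeasure μ] [IsFiniteMeasure ν] {S : Set V} {η : ℝ}
    (h : |(μ S).toReal - (ν S).toReal| ≤ η) : μ S ≤ ν S + ENNReal.ofReal η := by
  have h1 : (μ S).toReal ≤ (ν S).toReal + η := by
    have h2 := abs_le.mp h
    linarith [h2.2]
  calc μ S = ENNReal.ofReal (μ S).toReal := (ENNReal.ofReal_toReal (measure_ne_top μ S)).symm
    _ ≤ ENNReal.ofReal ((ν S).toReal + η) := ENNReal.ofReal_le_ofReal h1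
    _ ≤ ENNReal.ofReal (ν S).toReal + ENNReal.ofReal η := ENNReal.ofReal_add_le
    _ = ν S + ENNReal.ofReal η := by rw [ENNReal.ofReal_toReal (measure_ne_top ν S)]


/-- if `θ_k → θ` in total variation and `(id, φ_k)_# θ_k → (id, φ)_# θ`
weakly, then `φ_k → φ` in `θ`-probability. -/
theorem tendsto_in_probability_of_graph_weak_convergence
    {V : Type*} [MetricSpace V] [TopologicalSpace.SeparableSpace V] [CompleteSpace V]
    [MeasurableSpace V] [BorelSpace V]
    {Z : Type*} [MetricSpace Z] [TopologicalSpace.SeparableSpace Z] [CompleteSpace Z]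
    [MeasurableSpace Z] [BorelSpace Z]
    (θk : ℕ → Measure V) (hθk : ∀ k, IsProbabilityMeasure (θk k))
    (θ : Measure V) [IsProbabilityMeasure θ]
    (hTV : ∀ ε : ℝ, 0 < ε → ∀ᶠ k in Filter.atTop,
      ∀ A : Set V, MeasurableSet A → |((θk k) A).toReal - (θ A).toReal| ≤ ε)
    (φk : ℕ → V → Z) (hφk : ∀ k, Measurable (φk k)) (φ : V → Z) (hφ : Measurable φ)
    (hweak : ∀ f : BoundedContinuousFunction (V × Z) ℝ,
      Filter.Tendsto (fun k => ∫ q, f q ∂((θk k).map (fun v => (v, φk k v))))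
        Filter.atTop (nhds (∫ q, f q ∂(θ.map (fun v => (v, φ v)))))) :
    ∀ ε : ℝ, 0 < ε →
      Filter.Tendsto (fun k => θ {v : V | ε < dist (φk k v) (φ v)}) Filter.atTop (nhds 0) := by
  intro ε hε
  haveI : SecondCountableTopology V := UniformSpace.secondCountable_of_separable V
  haveI : SecondCountableTopology Z := UniformSpace.secondCountable_of_separable Z
  set c : ℝ := min 1 ε with hc_def
  have hc0 : 0 < c := lt_min one_pos hε
  have hc2 : 0 < c / 2 := by linarith
  rw [ENNReal.tendsto_nhds_zero]
  intro δ hδ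
  set δ' : ℝ≥0∞ := min δ 1 with hδ'_def
  have hδ'0 : 0 < δ' := lt_min hδ zero_lt_one
  have hδ'top : δ' ≠ ⊤ := ((min_le_right _ _).trans_lt ENNReal.one_lt_top).ne
  set η : ℝ := δ'.toReal / 5 with hη_def
  have hη : 0 < η := by
    have := ENNReal.toReal_pos hδ'0.ne' hδ'top
    positivity
  have hmk : ∀ k, Measurable fun v => (v, φk k v) := fun k => measurable_id.prodMk (hφk k)
  have hm : Measurable fun v => (v, φ v) := measurable_id.prodMk hφ
  have hφsm : StronglyMeasurable fun v => graphIota (φ v) :=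
    graphIota_lipschitz.continuous.comp_stronglyMeasurable hφ.stronglyMeasurable
  have hnormι : ∀ z : Z, ‖graphIota z‖ ≤ 1 := by
    intro z
    rw [BoundedContinuousFunction.norm_le zero_le_one]
    intro w
    rw [graphIota_apply, Real.norm_eq_abs, abs_of_nonneg (le_min zero_le_one dist_nonneg)]
    exact min_le_left _ _
  have hmem : MemLp (fun v => graphIota (φ v)) 1 θ :=
    MemLp.of_bound hφsm.aestronglyMeasurable 1 (Filter.Eventually.of_forall fun v => hnormι _)
  obtain ⟨g, hg, -⟩ := hmem.exists_boundedContinuous_eLpNorm_sub_le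
    (by norm_num : (1 : ℝ≥0∞) ≠ ∞) (ε := ENNReal.ofReal (η * (c / 2)))
    (by
      simp only [ne_eq, ENNReal.ofReal_eq_zero, not_le]
      positivity)
  set B : Set V := {v | c / 2 ≤ dist (graphIota (φ v)) (g v)} with hB_def
  have hgsm : StronglyMeasurable (⇑g) := g.continuous.stronglyMeasurable
  have hdistm : Measurable fun v => dist (graphIota (φ v)) (g v) :=
    (hφsm.dist hgsm).measurable
  have hBmeas : MeasurableSet B := measurableSet_le measurable_const hdistm
  -- Markov inequality: θ B ≤ ofReal η
  have hθB : θ B ≤ ENNReal.ofReal η := by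
    have hfm : AEMeasurable (fun v => (‖graphIota (φ v) - g v‖₊ : ℝ≥0∞)) θ :=
      (hφsm.sub hgsm).enorm.aemeasurable
    have hset : B = {v | ENNReal.ofReal (c / 2) ≤ (‖graphIota (φ v) - g v‖₊ : ℝ≥0∞)} := by
      ext v
      simp only [hB_def, Set.mem_setOf_eq, ← enorm_eq_nnnorm, ← ofReal_norm,
        ENNReal.ofReal_le_ofReal_iff (norm_nonneg _), dist_eq_norm]
    have hmar := meas_ge_le_lintegral_div hfm (ε := ENNReal.ofReal (c / 2))
      (ne_of_gt (ENNReal.ofReal_pos.mpr hc2)) ENNReal.ofReal_ne_top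
    rw [← hset] at hmar
    have hlint : (∫⁻ v, (‖graphIota (φ v) - g v‖₊ : ℝ≥0∞) ∂θ) ≤ ENNReal.ofReal (η * (c / 2)) := by
      rw [eLpNorm_one_eq_lintegral_enorm] at hg
      simpa [Pi.sub_apply, enorm_eq_nnnorm] using hg
    calc θ B ≤ _ := hmar
      _ ≤ ENNReal.ofReal (η * (c / 2)) / ENNReal.ofReal (c / 2) := by gcongr
      _ = ENNReal.ofReal η := by
          rw [ENNReal.ofReal_mul hη.le, mul_div_assoc,
            ENNReal.div_self (ne_of_gt (ENNReal.ofReal_pos.mpr hc2)) ENNReal.ofReal_ne_top,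
            mul_one]
  set K : Set (V × Z) := {p | c / 2 ≤ dist (graphIota p.2) (g p.1)} with hK_def
  have hKclosed : IsClosed K :=
    isClosed_le continuous_const
      ((graphIota_lipschitz.continuous.comp continuous_snd).dist
        (g.continuous.comp continuous_fst))
  haveI hPinst : ∀ k, IsProbabilityMeasure ((θk k).map fun v => (v, φk k v)) := fun k =>
    haveI := hθk k
    Measure.isProbabilityMeasure_map (hmk k).aemeasurable
  haveI : IsProbabilityMeasure (θ.map fun v => (v, φ v)) :=
    Measure.isProbabilityMeasure_map hm.aemeasurable
  set P : ℕ → ProbabilityMeasure (V × Z) :=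
    fun k => ⟨(θk k).map fun v => (v, φk k v), hPinst k⟩ with hP_def
  set Q : ProbabilityMeasure (V × Z) := ⟨θ.map fun v => (v, φ v), inferInstance⟩ with hQ_def
  have hPQ : Filter.Tendsto P Filter.atTop (nhds Q) :=
    MeasureTheory.ProbabilityMeasure.tendsto_iff_forall_integral_tendsto.mpr hweak
  have hlimsup : Filter.limsup (fun k => (P k : Measure (V × Z)) K) Filter.atTop
      ≤ (Q : Measure (V × Z)) K :=
    ProbabilityMeasure.limsup_measure_closed_le_of_tendsto hPQ hKclosed
  have hQK : (Q : Measure (V × Z)) K = θ B := by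
    show (θ.map fun v => (v, φ v)) K = θ B
    rw [Measure.map_apply hm hKclosed.measurableSet]
    rfl
  have hlt : Filter.limsup (fun k => (P k : Measure (V × Z)) K) Filter.atTop
      < ENNReal.ofReal η + ENNReal.ofReal η := by
    refine lt_of_le_of_lt (hlimsup.trans (hQK ▸ hθB)) ?_
    exact ENNReal.lt_add_right ENNReal.ofReal_ne_top
      (by simpa [ENNReal.ofReal_eq_zero, not_le] using hη)
  have hev1 : ∀ᶠ k in Filter.atTop,
      (P k : Measure (V × Z)) K < ENNReal.ofReal η + ENNReal.ofReal η :=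
    Filter.eventually_lt_of_limsup_lt hlt
  have hev2 := hTV η hη
  filter_upwards [hev1, hev2] with k h1 h2
  haveI := hθk k
  set A : Set V := {v | ε < dist (φk k v) (φ v)} with hA_def
  have hAmeas : MeasurableSet A := measurableSet_lt measurable_const ((hφk k).dist hφ)
  have hincl : A ⊆ B ∪ ((fun v => (v, φk k v)) ⁻¹' K) := by
    intro v hv
    simp only [hA_def, Set.mem_setOf_eq] at hv
    by_cases hvB : c / 2 ≤ dist (graphIota (φ v)) (g v)
    · exact Or.inl hvB
    · right
      show c / 2 ≤ dist (graphIota (φk k v)) (g v)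
      push_neg at hvB
      have hlow : c ≤ dist (graphIota (φk k v)) (graphIota (φ v)) :=
        le_trans (min_le_min le_rfl hv.le) (graphIota_lower _ _)
      have htri := dist_triangle (graphIota (φk k v)) (g v) (graphIota (φ v))
      have hcm : dist (graphIota (φ v)) (g v) = dist (g v) (graphIota (φ v)) := dist_comm _ _
      linarith
  have hPkK : (P k : Measure (V × Z)) K = (θk k) ((fun v => (v, φk k v)) ⁻¹' K) := by
    show ((θk k).map fun v => (v, φk k v)) K = _
    rw [Measure.map_apply (hmk k) hKclosed.measurableSet]
  have step : θk k A ≤ θk k B + (P k : Measure (V × Z)) K := by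
    rw [hPkK]
    exact (measure_mono hincl).trans (measure_union_le _ _)
  have tθ : θ A ≤ θk k A + ENNReal.ofReal η := by
    refine tv_step θ (θk k) ?_
    rw [abs_sub_comm]
    exact h2 A hAmeas
  have tB : θk k B ≤ θ B + ENNReal.ofReal η := tv_step (θk k) θ (h2 B hBmeas)
  calc θ A ≤ θk k A + ENNReal.ofReal η := tθ
    _ ≤ (θk k B + (P k : Measure (V × Z)) K) + ENNReal.ofReal η := by gcongr
    _ ≤ ((θ B + ENNReal.ofReal η) + (ENNReal.ofReal η + ENNReal.ofReal η))
        + ENNReal.ofReal η := add_le_add (add_le_add tB h1.le) le_rfl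
    _ ≤ ((ENNReal.ofReal η + ENNReal.ofReal η) + (ENNReal.ofReal η + ENNReal.ofReal η))
        + ENNReal.ofReal η := by gcongr
    _ = ENNReal.ofReal (5 * η) := by
        have h5 : (5 : ℝ) * η = η + η + (η + η) + η := by ring
        rw [h5, ENNReal.ofReal_add (by positivity) hη.le,
          ENNReal.ofReal_add (by positivity) (by positivity),
          ENNReal.ofReal_add hη.le hη.le]
    _ = δ' := by
        rw [hη_def, show (5 : ℝ) * (δ'.toReal / 5) = δ'.toReal by ring,
          ENNReal.ofReal_toReal hδ'top]
    _ ≤ δ := min_le_left _ _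
end

section
/- Let (V, d_V) and (Z, d_Z) be Polish metric spaces, p ≥ 1, μ a probability measure on V with finite p-th moment, and φ : V → Z measurable with φ_# μ having finite p-th moment. Then for any sequence of couplings π_k ∈ Π(μ, μ) with ∫ d_V(v, v̂)^p dπ_k(v, v̂) → 0, it follows that ∫ d_Z(φ(v), φ(v̂))^p dπ_k(v, v̂) → 0. -/
open MeasureTheory

open Metric Set Filter ENNReal
open scoped NNReal

/-- `(x+y+z)^p ≤ 3^p (x^p + y^p + z^p)` in `ℝ≥0∞`. -/
lemma eder_rpow_add3 (p : ℝ) (hp : 0 ≤ p) (x y z : ℝ≥0∞) :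
    (x + y + z) ^ p ≤ 3 ^ p * (x ^ p + y ^ p + z ^ p) := by
  have px : x ^ p ≤ x ^ p + y ^ p + z ^ p := le_add_right (le_add_right le_rfl)
  have py : y ^ p ≤ x ^ p + y ^ p + z ^ p := le_add_right (le_add_left le_rfl)
  have pz : z ^ p ≤ x ^ p + y ^ p + z ^ p := le_add_left le_rfl
  have key : ∀ w : ℝ≥0∞, x ≤ w → y ≤ w → z ≤ w → w ^ p ≤ x ^ p + y ^ p + z ^ p →
      (x + y + z) ^ p ≤ 3 ^ p * (x ^ p + y ^ p + z ^ p) := by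
    intro w hx hy hz h2
    have hw : x + y + z ≤ 3 * w := by
      calc x + y + z ≤ w + w + w := by gcongr
      _ = 3 * w := by ring
    calc (x + y + z) ^ p ≤ (3 * w) ^ p := ENNReal.rpow_le_rpow hw hp
    _ = 3 ^ p * w ^ p := ENNReal.mul_rpow_of_nonneg _ _ hp
    _ ≤ 3 ^ p * (x ^ p + y ^ p + z ^ p) := by gcongr
  rcases le_total x y with h1 | h1 <;> rcases le_total y z with h2 | h2 <;>
    rcases le_total x z with h3 | h3
  · exact key z h3 h2 le_rfl pz
  · exact key x le_rfl (h2.trans h3) h3 px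
  · exact key y h1 le_rfl h2 py
  · exact key y h1 le_rfl h2 py
  · exact key z h3 h2 le_rfl pz
  · exact key x le_rfl h1 h3 px
  · exact key z h3 (h1.trans h3) le_rfl pz
  · exact key x le_rfl h1 h3 px

/-- Lipschitz approximation of an indicator function in `ℒ^q`. -/
lemma eder_indicator_approx {V : Type*} [MetricSpace V] [MeasurableSpace V] [BorelSpace V]
    {E : Type*} [NormedAddCommGroup E] [NormedSpace ℝ E]
    (μ : Measure V) [IsFiniteMeasure μ] {q : ℝ≥0∞} (hq0 : q ≠ 0) (hqt : q ≠ ∞)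
    (c : E) {s : Set V} (hs : MeasurableSet s) {ε : ℝ≥0∞} (hε : ε ≠ 0) :
    ∃ g : V → E, eLpNorm (g - s.indicator fun _ => c) q μ ≤ ε ∧
      ∃ L : ℝ≥0, LipschitzWith L g := by
  set pr := q.toReal with hpr
  have hprpos : 0 < pr := ENNReal.toReal_pos hq0 hqt
  set θ : ℝ≥0∞ := (ε / (‖c‖₊ + 1)) ^ pr with hθ
  have hθ0 : θ ≠ 0 := by
    have : ε / (‖c‖₊ + 1) ≠ 0 := by
      simp [ENNReal.div_ne_zero, hε]
    simp [hθ, ENNReal.rpow_eq_zero_iff, this, hprpos, not_lt.2 hprpos.le]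
  -- key arithmetic estimate
  have key : ∀ m : ℝ≥0∞, m ≤ θ → (‖c‖₊ : ℝ≥0∞) * m ^ (1 / pr) ≤ ε := by
    intro m hm
    have h1 : m ^ (1 / pr) ≤ θ ^ (1 / pr) :=
      ENNReal.rpow_le_rpow hm (by positivity)
    have h2 : θ ^ (1 / pr) = ε / (‖c‖₊ + 1) := by
      rw [hθ, ← ENNReal.rpow_mul, mul_one_div, div_self hprpos.ne', ENNReal.rpow_one]
    calc (‖c‖₊ : ℝ≥0∞) * m ^ (1 / pr) ≤ (‖c‖₊ + 1) * (ε / (‖c‖₊ + 1)) := by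
          rw [h2] at h1; exact mul_le_mul' (le_add_of_le_of_nonneg le_rfl zero_le) h1
    _ = ε := ENNReal.mul_div_cancel' (by simp) (by simp)
  have hθ2 : θ / 2 ≠ 0 := by simp [ENNReal.div_eq_zero_iff, hθ0]
  obtain ⟨F, hFs, hFcl, hμsF⟩ := hs.exists_isClosed_diff_lt (measure_ne_top μ s) hθ2
  rcases F.eq_empty_or_nonempty with hFe | hFne
  · -- degenerate case : take g = 0
    refine ⟨0, ?_, 0, LipschitzWith.const' 0⟩
    have hμs : μ s ≤ θ := by
      have : μ (s \ F) = μ s := by rw [hFe, diff_empty]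
      rw [this] at hμsF
      exact le_trans hμsF.le (ENNReal.half_le_self)
    have : eLpNorm ((0 : V → E) - s.indicator fun _ => c) q μ
        = eLpNorm (s.indicator fun _ => c) q μ := by
      rw [zero_sub, eLpNorm_neg]
    rw [this, eLpNorm_indicator_const hs hq0 hqt]
    exact key _ hμs
  · -- main case: use a thickening of F
    have htend := tendsto_measure_thickening (μ := μ) (s := F) ⟨1, one_pos, measure_ne_top μ _⟩
    rw [hFcl.closure_eq] at htend
    have hlt : μ F < μ F + θ / 2 := ENNReal.lt_add_right (measure_ne_top μ F) hθ2
    obtain ⟨r, hr1, hr0⟩ := ((htend.eventually_lt_const hlt).and self_mem_nhdsWithin).exists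
    have hrpos : (0 : ℝ) < r := hr0
    have hμT : μ (thickening r F \ F) < θ / 2 :=
      measure_diff_lt_of_lt_add hFcl.nullMeasurableSet (self_subset_thickening hrpos F)
        (measure_ne_top μ F) hr1
    set t : V → ℝ := fun x => max (1 - r⁻¹ * infDist x F) 0 with ht
    refine ⟨fun x => t x • c, ?_, Real.toNNReal (r⁻¹ * ‖c‖), ?_⟩
    · -- eLpNorm estimate
      set bad : Set V := (thickening r F \ F) ∪ (s \ F) with hbad
      have hbadm : MeasurableSet bad :=
        ((isOpen_thickening.measurableSet).diff hFcl.measurableSet).union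
          (hs.diff hFcl.measurableSet)
      have ht01 : ∀ x, 0 ≤ t x ∧ t x ≤ 1 := by
        intro x
        refine ⟨le_max_right _ _, max_le ?_ zero_le_one⟩
        have : 0 ≤ r⁻¹ * infDist x F := mul_nonneg (inv_nonneg.2 hrpos.le) infDist_nonneg
        linarith
      have hptwise : ∀ x, ‖(fun y => t y • c) x - s.indicator (fun _ => c) x‖
          ≤ ‖bad.indicator (fun _ => c) x‖ := by
        intro x
        by_cases hxF : x ∈ F
        · have h0 : infDist x F = 0 := infDist_zero_of_mem hxF
          have : t x = 1 := by simp [ht, h0]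
          simp [this, indicator_of_mem (hFs hxF)]
        by_cases hxT : x ∈ thickening r F
        · have hxbad : x ∈ bad := Or.inl ⟨hxT, hxF⟩
          rw [indicator_of_mem hxbad]
          by_cases hxs : x ∈ s
          · rw [indicator_of_mem hxs]
            have : t x • c - c = (t x - 1) • c := by rw [sub_smul, one_smul]
            rw [this, norm_smul]
            have : |t x - 1| ≤ 1 := by
              obtain ⟨ha, hb⟩ := ht01 x
              rw [abs_le]; constructor <;> linarith
            calc |t x - 1| * ‖c‖ ≤ 1 * ‖c‖ := by
                  exact mul_le_mul_of_nonneg_right (by simpa using this) (norm_nonneg c)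
            _ = ‖c‖ := one_mul _
          · rw [indicator_of_notMem hxs, sub_zero, norm_smul]
            calc ‖t x‖ * ‖c‖ ≤ 1 * ‖c‖ := by
                  refine mul_le_mul_of_nonneg_right ?_ (norm_nonneg c)
                  rw [Real.norm_eq_abs, abs_le]
                  exact ⟨by linarith [(ht01 x).1], (ht01 x).2⟩
            _ = ‖c‖ := one_mul _
        · -- x far from F : t x = 0
          have hdist : r ≤ infDist x F := by
            by_contra h
            exact hxT ((mem_thickening_iff_infDist_lt hFne).2 (lt_of_not_ge h))
          have htx : t x = 0 := by
            have h1 : (1 : ℝ) ≤ r⁻¹ * infDist x F := by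
              rw [← inv_mul_cancel₀ hrpos.ne']
              exact mul_le_mul_of_nonneg_left hdist (by positivity)
            simp [ht, max_eq_right, sub_nonpos.2 h1]
          by_cases hxs : x ∈ s
          · have hxbad : x ∈ bad := Or.inr ⟨hxs, hxF⟩
            simp [htx, indicator_of_mem hxbad, indicator_of_mem hxs]
          · have : x ∉ bad := by
              rintro (⟨h1, _⟩ | ⟨h1, _⟩) <;> [exact hxT h1; exact hxs h1]
            simp [htx, indicator_of_notMem hxs, indicator_of_notMem this]
      calc eLpNorm ((fun y => t y • c) - s.indicator fun _ => c) q μ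
          ≤ eLpNorm (bad.indicator fun _ => c) q μ := eLpNorm_mono hptwise
      _ = (‖c‖₊ : ℝ≥0∞) * μ bad ^ (1 / pr) := eLpNorm_indicator_const hbadm hq0 hqt
      _ ≤ ε := by
          refine key _ ?_
          calc μ bad ≤ μ (thickening r F \ F) + μ (s \ F) := measure_union_le _ _
          _ ≤ θ / 2 + θ / 2 := add_le_add hμT.le hμsF.le
          _ = θ := ENNReal.add_halves θ
    · -- Lipschitz
      refine LipschitzWith.of_dist_le_mul fun x y => ?_
      have hcoe : (Real.toNNReal (r⁻¹ * ‖c‖) : ℝ) = r⁻¹ * ‖c‖ :=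
        Real.coe_toNNReal _ (by positivity)
      rw [hcoe, dist_eq_norm, ← sub_smul, norm_smul, Real.norm_eq_abs]
      have h1 : |t x - t y| ≤ r⁻¹ * dist x y := by
        have h2 : |t x - t y| ≤ |(1 - r⁻¹ * infDist x F) - (1 - r⁻¹ * infDist y F)| :=
          abs_max_sub_max_le_abs _ _ _
        have h3 : |(1 - r⁻¹ * infDist x F) - (1 - r⁻¹ * infDist y F)|
            = r⁻¹ * |infDist x F - infDist y F| := by
          rw [show (1 - r⁻¹ * infDist x F) - (1 - r⁻¹ * infDist y F)
              = r⁻¹ * (infDist y F - infDist x F) by ring, abs_mul, abs_of_nonneg (by positivity),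
            abs_sub_comm]
        have h4 : |infDist x F - infDist y F| ≤ dist x y := by
          have := (lipschitz_infDist_pt F).dist_le_mul x y
          rwa [NNReal.coe_one, one_mul, Real.dist_eq] at this
        rw [h3] at h2
        calc |t x - t y| ≤ r⁻¹ * |infDist x F - infDist y F| := h2
        _ ≤ r⁻¹ * dist x y := by
            exact mul_le_mul_of_nonneg_left h4 (by positivity)
      calc |t x - t y| * ‖c‖ ≤ (r⁻¹ * dist x y) * ‖c‖ :=
            mul_le_mul_of_nonneg_right h1 (norm_nonneg c)
      _ = r⁻¹ * ‖c‖ * dist x y := by ring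

/-- Lipschitz functions are dense in `ℒ^q` over a separable metric space with
a finite Borel measure. -/
lemma eder_exists_lipschitz {V : Type*} [MetricSpace V] [TopologicalSpace.SeparableSpace V]
    [MeasurableSpace V] [BorelSpace V]
    {E : Type*} [NormedAddCommGroup E] [NormedSpace ℝ E]
    (μ : Measure V) [IsFiniteMeasure μ] {q : ℝ≥0∞} (hq0 : q ≠ 0) (hqt : q ≠ ∞)
    {f : V → E} (hf : MemLp f q μ) {ε : ℝ≥0∞} (hε : ε ≠ 0) :
    ∃ g : V → E, eLpNorm (f - g) q μ ≤ ε ∧ ∃ L : ℝ≥0, LipschitzWith L g := by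
  haveI : SecondCountableTopology V := UniformSpace.secondCountable_of_separable V
  refine hf.induction_dense hqt (fun g => ∃ L : ℝ≥0, LipschitzWith L g) ?_ ?_ ?_ hε
  · intro c s hs _ ε' hε'
    exact eder_indicator_approx μ hq0 hqt c hs hε'
  · rintro f g ⟨Lf, hLf⟩ ⟨Lg, hLg⟩
    exact ⟨Lf + Lg, hLf.add hLg⟩
  · rintro f ⟨L, hL⟩
    exact hL.continuous.aestronglyMeasurable

/-- Eder's lemma: if the transport cost of couplings `π_k ∈ Π(μ,μ)`
vanishes, then so does the cost measured through a measurable map `φ` whose push-forward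
has finite `p`-th moment. -/
theorem eder_lemma (p : ℝ) (hp : 1 ≤ p)
    {V : Type*} [MetricSpace V] [TopologicalSpace.SeparableSpace V] [CompleteSpace V]
    [MeasurableSpace V] [BorelSpace V]
    {Z : Type*} [MetricSpace Z] [TopologicalSpace.SeparableSpace Z] [CompleteSpace Z]
    [MeasurableSpace Z] [BorelSpace Z]
    (μ : Measure V) [IsProbabilityMeasure μ]
    (hμmom : ∀ v₀ : V, (∫⁻ v, edist v v₀ ^ p ∂μ) < ⊤)
    (φ : V → Z) (hφ : Measurable φ)
    (hφmom : ∀ z₀ : Z, (∫⁻ v, edist (φ v) z₀ ^ p ∂μ) < ⊤)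
    (πk : ℕ → Measure (V × V)) (hπk : ∀ k, IsCoupling (πk k) μ μ)
    (hcost : Filter.Tendsto (fun k => ∫⁻ q, edist q.1 q.2 ^ p ∂(πk k))
      Filter.atTop (nhds 0)) :
    Filter.Tendsto (fun k => ∫⁻ q, edist (φ q.1) (φ q.2) ^ p ∂(πk k))
      Filter.atTop (nhds 0) := by
  classical
  have hppos : (0 : ℝ) < p := lt_of_lt_of_le one_pos hp
  -- the spaces are nonempty
  have hVne : Nonempty V := by
    by_contra h
    rw [not_nonempty_iff] at h
    have h1 : (1 : ℝ≥0∞) = 0 := by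
      rw [← measure_univ (μ := μ), Set.univ_eq_empty_iff.2 h, measure_empty]
    exact one_ne_zero h1
  obtain ⟨v₀⟩ := hVne
  haveI : SecondCountableTopology V := UniformSpace.secondCountable_of_separable V
  set z₀ : Z := φ v₀ with hz₀
  -- embed `Z` isometrically into the Banach space `ℓ^∞(ℕ)`
  set E : Type := ↥(lp (fun _ : ℕ => ℝ) ⊤) with hE
  borelize E
  set ι : Z → E := kuratowskiEmbedding Z with hιdef
  have hι : Isometry ι := kuratowskiEmbedding.isometry Z
  set ψ : V → E := fun v => ι (φ v) with hψdef
  have hψmeas : Measurable ψ := hι.continuous.measurable.comp hφ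
  have hψsm : StronglyMeasurable ψ := by
    refine stronglyMeasurable_iff_measurable_separable.2 ⟨hψmeas, ?_⟩
    refine (TopologicalSpace.isSeparable_range hι.continuous).mono ?_
    rintro _ ⟨v, rfl⟩
    exact ⟨φ v, rfl⟩
  set q : ℝ≥0∞ := ENNReal.ofReal p with hqdef
  have hq0 : q ≠ 0 := by
    simp only [hqdef, ne_eq, ENNReal.ofReal_eq_zero, not_le]
    linarith
  have hqt : q ≠ ⊤ := ENNReal.ofReal_ne_top
  have hqre : q.toReal = p := ENNReal.toReal_ofReal hppos.le
  -- `ψ` is in `ℒ^q`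
  have hedistψ : ∀ v : V, (‖ψ v - ι z₀‖₊ : ℝ≥0∞) = edist (φ v) z₀ := by
    intro v
    rw [← enorm_eq_nnnorm, ← edist_eq_enorm_sub]
    exact hι.edist_eq _ _
  have hψmem : MemLp ψ q μ := by
    have hsub : MemLp (fun v => ψ v - ι z₀) q μ := by
      refine ⟨(hψsm.sub stronglyMeasurable_const).aestronglyMeasurable, ?_⟩
      rw [eLpNorm_eq_lintegral_rpow_enorm_toReal hq0 hqt, hqre]
      simp only [enorm_eq_nnnorm, hedistψ]
      exact ENNReal.rpow_lt_top_of_nonneg (by positivity) (hφmom z₀).ne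
    have hψeq : ψ = (fun v => ψ v - ι z₀) + fun _ => ι z₀ := by
      funext v; simp
    rw [hψeq]
    exact hsub.add (memLp_const _)
  -- setting up the `ε`-argument
  rw [ENNReal.tendsto_nhds_zero]
  intro ε hε
  set ε' : ℝ≥0∞ := min ε 1 with hε'def
  have hε'0 : ε' ≠ 0 := (lt_min hε one_pos).ne'
  have hε't : ε' ≠ ⊤ := ne_top_of_le_ne_top one_ne_top (min_le_right _ _)
  set c3 : ℝ≥0∞ := 3 ^ p with hc3def
  have hc30 : c3 ≠ 0 := by
    simp [hc3def, ENNReal.rpow_eq_zero_iff, not_lt.2 hppos.le, hppos]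
  have hc3t : c3 ≠ ⊤ := by
    simp [hc3def, ENNReal.rpow_eq_top_iff, not_lt.2 hppos.le, hppos]
  have hc3tot : c3 * 3 ≠ ⊤ := ENNReal.mul_ne_top hc3t (by simp)
  have hc3to0 : c3 * 3 ≠ 0 := by simp [hc30]
  set e : ℝ≥0∞ := ε' / (c3 * 3) with hedef
  have he0 : e ≠ 0 := by
    simp only [hedef, ne_eq, ENNReal.div_eq_zero_iff, not_or]
    exact ⟨hε'0, hc3tot⟩
  -- choose `g` Lipschitz with `eLpNorm (ψ - g) q μ ≤ e ^ (1/p)`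
  set δ : ℝ≥0∞ := e ^ (1 / p) with hδdef
  have hδ0 : δ ≠ 0 := by
    rw [hδdef]
    intro h
    rw [ENNReal.rpow_eq_zero_iff] at h
    rcases h with ⟨h, _⟩ | ⟨_, hlt⟩
    · exact he0 h
    · exact absurd hlt (not_lt.2 (by positivity))
  obtain ⟨g, hg, L, hL⟩ := eder_exists_lipschitz μ hq0 hqt hψmem hδ0
  haveI : SecondCountableTopologyEither V E := ⟨Or.inl inferInstance⟩
  have hgsm : StronglyMeasurable g := hL.continuous.stronglyMeasurable
  -- the outer terms
  have hA : (∫⁻ v, edist (ψ v) (g v) ^ p ∂μ) ≤ e := by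
    have heq : (∫⁻ v, edist (ψ v) (g v) ^ p ∂μ) = eLpNorm (ψ - g) q μ ^ p := by
      rw [eLpNorm_eq_lintegral_rpow_enorm_toReal hq0 hqt, hqre, ← ENNReal.rpow_mul, one_div,
        inv_mul_cancel₀ hppos.ne', ENNReal.rpow_one]
      simp only [Pi.sub_apply, edist_eq_enorm_sub]
    rw [heq]
    calc eLpNorm (ψ - g) q μ ^ p ≤ δ ^ p := ENNReal.rpow_le_rpow hg hppos.le
    _ = e := by
      rw [hδdef, ← ENNReal.rpow_mul, one_div, inv_mul_cancel₀ hppos.ne', ENNReal.rpow_one]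
  -- measurability of the integrands
  have hf1 : Measurable fun v : V => edist (ψ v) (g v) ^ p :=
    ((continuous_edist.comp_stronglyMeasurable (hψsm.prodMk hgsm)).measurable).pow_const p
  have hf2 : Measurable fun v : V => edist (g v) (ψ v) ^ p :=
    ((continuous_edist.comp_stronglyMeasurable (hgsm.prodMk hψsm)).measurable).pow_const p
  have hLt : ((L : ℝ≥0∞)) ^ p ≠ ⊤ := by
    simp [ENNReal.rpow_eq_top_iff, not_lt.2 hppos.le, hppos]
  -- per-`k` estimate
  have hbound : ∀ k, (∫⁻ q', edist (φ q'.1) (φ q'.2) ^ p ∂(πk k))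
      ≤ c3 * (e + (L : ℝ≥0∞) ^ p * (∫⁻ q', edist q'.1 q'.2 ^ p ∂(πk k)) + e) := by
    intro k
    obtain ⟨hfst, hsnd⟩ := hπk k
    have step1 : (∫⁻ q', edist (φ q'.1) (φ q'.2) ^ p ∂(πk k))
        ≤ ∫⁻ q', c3 * (edist (ψ q'.1) (g q'.1) ^ p + ((L : ℝ≥0∞) ^ p * edist q'.1 q'.2 ^ p)
            + edist (g q'.2) (ψ q'.2) ^ p) ∂(πk k) := by
      refine lintegral_mono fun q' => ?_
      have htri : edist (φ q'.1) (φ q'.2) = edist (ψ q'.1) (ψ q'.2) := (hι.edist_eq _ _).symm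
      have h4 : edist (ψ q'.1) (ψ q'.2)
          ≤ edist (ψ q'.1) (g q'.1) + edist (g q'.1) (g q'.2) + edist (g q'.2) (ψ q'.2) :=
        edist_triangle4 _ _ _ _
      have hmid : edist (g q'.1) (g q'.2) ^ p ≤ (L : ℝ≥0∞) ^ p * edist q'.1 q'.2 ^ p := by
        calc edist (g q'.1) (g q'.2) ^ p ≤ ((L : ℝ≥0∞) * edist q'.1 q'.2) ^ p :=
              ENNReal.rpow_le_rpow (hL q'.1 q'.2) hppos.le
        _ = (L : ℝ≥0∞) ^ p * edist q'.1 q'.2 ^ p := ENNReal.mul_rpow_of_nonneg _ _ hppos.le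
      calc edist (φ q'.1) (φ q'.2) ^ p
          = edist (ψ q'.1) (ψ q'.2) ^ p := by rw [htri]
      _ ≤ (edist (ψ q'.1) (g q'.1) + edist (g q'.1) (g q'.2) + edist (g q'.2) (ψ q'.2)) ^ p :=
            ENNReal.rpow_le_rpow h4 hppos.le
      _ ≤ c3 * (edist (ψ q'.1) (g q'.1) ^ p + edist (g q'.1) (g q'.2) ^ p
            + edist (g q'.2) (ψ q'.2) ^ p) := eder_rpow_add3 p hppos.le _ _ _
      _ ≤ c3 * (edist (ψ q'.1) (g q'.1) ^ p + ((L : ℝ≥0∞) ^ p * edist q'.1 q'.2 ^ p)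
            + edist (g q'.2) (ψ q'.2) ^ p) := by gcongr
    have hm1 : Measurable fun q' : V × V => edist (ψ q'.1) (g q'.1) ^ p :=
      hf1.comp measurable_fst
    have hm2 : Measurable fun q' : V × V => (L : ℝ≥0∞) ^ p * edist q'.1 q'.2 ^ p :=
      (((measurable_fst.edist measurable_snd)).pow_const p).const_mul _
    have hm3 : Measurable fun q' : V × V => edist (g q'.2) (ψ q'.2) ^ p :=
      hf2.comp measurable_snd
    have hmarg1 : (∫⁻ q' : V × V, edist (ψ q'.1) (g q'.1) ^ p ∂(πk k))
        = ∫⁻ v, edist (ψ v) (g v) ^ p ∂μ := by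
      rw [← hfst, lintegral_map hf1 measurable_fst]
    have hmarg2 : (∫⁻ q' : V × V, edist (g q'.2) (ψ q'.2) ^ p ∂(πk k))
        = ∫⁻ v, edist (g v) (ψ v) ^ p ∂μ := by
      rw [← hsnd, lintegral_map hf2 measurable_snd]
    have hAsym : (∫⁻ v, edist (g v) (ψ v) ^ p ∂μ) = ∫⁻ v, edist (ψ v) (g v) ^ p ∂μ := by
      simp_rw [edist_comm (α := E)]
    calc (∫⁻ q', edist (φ q'.1) (φ q'.2) ^ p ∂(πk k))
        ≤ ∫⁻ q', c3 * (edist (ψ q'.1) (g q'.1) ^ p + ((L : ℝ≥0∞) ^ p * edist q'.1 q'.2 ^ p)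
            + edist (g q'.2) (ψ q'.2) ^ p) ∂(πk k) := step1
    _ = c3 * ∫⁻ q', (edist (ψ q'.1) (g q'.1) ^ p + ((L : ℝ≥0∞) ^ p * edist q'.1 q'.2 ^ p)
            + edist (g q'.2) (ψ q'.2) ^ p) ∂(πk k) := lintegral_const_mul' _ _ hc3t
    _ = c3 * ((∫⁻ q' : V × V, edist (ψ q'.1) (g q'.1) ^ p ∂(πk k))
          + (∫⁻ q' : V × V, (L : ℝ≥0∞) ^ p * edist q'.1 q'.2 ^ p ∂(πk k))
          + ∫⁻ q' : V × V, edist (g q'.2) (ψ q'.2) ^ p ∂(πk k)) := by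
        rw [lintegral_add_left (f := fun q' : V × V => edist (ψ q'.1) (g q'.1) ^ p
          + (L : ℝ≥0∞) ^ p * edist q'.1 q'.2 ^ p) (hm1.add hm2) _, lintegral_add_left hm1]
    _ = c3 * ((∫⁻ v, edist (ψ v) (g v) ^ p ∂μ)
          + (L : ℝ≥0∞) ^ p * (∫⁻ q', edist q'.1 q'.2 ^ p ∂(πk k))
          + ∫⁻ v, edist (ψ v) (g v) ^ p ∂μ) := by
        rw [hmarg1, hmarg2, hAsym, lintegral_const_mul' _ _ hLt]
    _ ≤ c3 * (e + (L : ℝ≥0∞) ^ p * (∫⁻ q', edist q'.1 q'.2 ^ p ∂(πk k)) + e) := by gcongr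
  -- the middle term is eventually small
  have hmid : ∀ᶠ k in Filter.atTop,
      (L : ℝ≥0∞) ^ p * (∫⁻ q', edist q'.1 q'.2 ^ p ∂(πk k)) ≤ e := by
    have htendmid : Filter.Tendsto
        (fun k => (L : ℝ≥0∞) ^ p * (∫⁻ q', edist q'.1 q'.2 ^ p ∂(πk k)))
        Filter.atTop (nhds 0) := by
      have := ENNReal.Tendsto.const_mul hcost (Or.inr hLt)
      simpa using this
    exact htendmid.eventually_le_const (lt_of_le_of_ne zero_le (Ne.symm he0))
  filter_upwards [hmid] with k hk
  calc (∫⁻ q', edist (φ q'.1) (φ q'.2) ^ p ∂(πk k))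
      ≤ c3 * (e + (L : ℝ≥0∞) ^ p * (∫⁻ q', edist q'.1 q'.2 ^ p ∂(πk k)) + e) := hbound k
  _ ≤ c3 * (e + e + e) := by gcongr
  _ = c3 * 3 * e := by ring
  _ = ε' := by rw [hedef, ENNReal.mul_div_cancel hc3to0 hc3tot]
  _ ≤ ε := min_le_left _ _
end

section
/- For probability measures μ, ν, μ', ν' on ℝ with finite p-th moments (p ≥ 1), the Hausdorff distance with respect to W_p between the sets of couplings Π(μ,ν) and Π(μ',ν') satisfies d_H(Π(μ,ν), Π(μ',ν')) ≤ (W_p^p(μ,μ') + W_p^p(ν,ν'))^{1/p} ≤ W_p(μ,μ') + W_p(ν,ν'). -/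
open MeasureTheory

/-- The `p`-th power transport cost. -/
noncomputable def WpCost {X : Type*} [MeasurableSpace X] [PseudoEMetricSpace X]
    (p : ℝ) (μ ν : Measure X) : ENNReal :=
  ⨅ π ∈ {π : Measure (X × X) | IsCoupling π μ ν}, ∫⁻ q, edist q.1 q.2 ^ p ∂π

/-- The `p`-Wasserstein distance. -/
noncomputable def Wp {X : Type*} [MeasurableSpace X] [PseudoEMetricSpace X]
    (p : ℝ) (μ ν : Measure X) : ENNReal :=
  WpCost p μ ν ^ (1 / p)

/-- The Hausdorff distance induced by `W_p` on sets of measures on `ℝ²`. -/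
noncomputable def hausdorffWp (p : ℝ) (A B : Set (Measure (ℝ × ℝ))) : ENNReal :=
  max (⨆ a ∈ A, ⨅ b ∈ B, Wp p a b) (⨆ b ∈ B, ⨅ a ∈ A, Wp p a b)

open ProbabilityTheory
open scoped ENNReal

section AuxLemmas

variable {p : ℝ}

lemma aux_isProbabilityMeasure_of_coupling {X Y : Type*} [MeasurableSpace X] [MeasurableSpace Y]
    {π : Measure (X × Y)} {μ : Measure X} {ν : Measure Y}
    (h : IsCoupling π μ ν) [IsProbabilityMeasure μ] : IsProbabilityMeasure π := by
  constructor
  have h1 : (π.map Prod.fst) Set.univ = π Set.univ := by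
    rw [Measure.map_apply measurable_fst MeasurableSet.univ]; rfl
  rw [← h1, h.1]
  exact measure_univ

lemma aux_isCoupling_swap {X : Type*} [MeasurableSpace X]
    {π : Measure (X × X)} {μ ν : Measure X} (h : IsCoupling π μ ν) :
    IsCoupling (π.map Prod.swap) ν μ := by
  constructor
  · rw [Measure.map_map measurable_fst measurable_swap]
    simpa [show Prod.fst ∘ Prod.swap = (Prod.snd : X × X → X) from rfl] using h.2
  · rw [Measure.map_map measurable_snd measurable_swap]
    simpa [show Prod.snd ∘ Prod.swap = (Prod.fst : X × X → X) from rfl] using h.1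

lemma aux_cost_measurable {X : Type*} [MeasurableSpace X] [PseudoEMetricSpace X]
    [OpensMeasurableSpace X] [SecondCountableTopology X] :
    Measurable fun q : X × X => edist q.1 q.2 ^ p :=
  measurable_edist.pow_const p

lemma aux_WpCost_le {X : Type*} [MeasurableSpace X] [PseudoEMetricSpace X]
    {μ ν : Measure X} {π : Measure (X × X)} (h : IsCoupling π μ ν) :
    WpCost p μ ν ≤ ∫⁻ q, edist q.1 q.2 ^ p ∂π :=
  iInf₂_le π h

lemma aux_cost_swap {X : Type*} [MeasurableSpace X] [PseudoEMetricSpace X]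
    [OpensMeasurableSpace X] [SecondCountableTopology X] (π : Measure (X × X)) :
    ∫⁻ q, edist q.1 q.2 ^ p ∂(π.map Prod.swap) = ∫⁻ q, edist q.1 q.2 ^ p ∂π := by
  rw [lintegral_map aux_cost_measurable measurable_swap]
  simp only [Prod.fst_swap, Prod.snd_swap]
  simp_rw [edist_comm]

lemma aux_WpCost_comm {X : Type*} [MeasurableSpace X] [PseudoEMetricSpace X]
    [OpensMeasurableSpace X] [SecondCountableTopology X] (μ ν : Measure X) :
    WpCost p μ ν = WpCost p ν μ := by
  have key : ∀ (μ ν : Measure X), WpCost p μ ν ≤ WpCost p ν μ := by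
    intro μ ν
    refine le_iInf₂ fun π hπ => ?_
    calc WpCost p μ ν ≤ ∫⁻ q, edist q.1 q.2 ^ p ∂(π.map Prod.swap) :=
          aux_WpCost_le (aux_isCoupling_swap hπ)
      _ = ∫⁻ q, edist q.1 q.2 ^ p ∂π := aux_cost_swap π
  exact le_antisymm (key μ ν) (key ν μ)

lemma aux_Wp_comm {X : Type*} [MeasurableSpace X] [PseudoEMetricSpace X]
    [OpensMeasurableSpace X] [SecondCountableTopology X] (μ ν : Measure X) :
    Wp p μ ν = Wp p ν μ := by
  rw [Wp, Wp, aux_WpCost_comm]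

end AuxLemmas

section Glue

open ProbabilityTheory

lemma aux_glue (p : ℝ) (μ ν μ' ν' : Measure ℝ)
    [IsProbabilityMeasure μ] [IsProbabilityMeasure ν]
    [IsProbabilityMeasure μ'] [IsProbabilityMeasure ν']
    (π : Measure (ℝ × ℝ)) (hπ : IsCoupling π μ ν)
    (α β : Measure (ℝ × ℝ)) (hα : IsCoupling α μ μ') (hβ : IsCoupling β ν ν') :
    ∃ π' : Measure (ℝ × ℝ), IsCoupling π' μ' ν' ∧
      WpCost p π π' ≤ (∫⁻ q, edist q.1 q.2 ^ p ∂α) + ∫⁻ q, edist q.1 q.2 ^ p ∂β := by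
  haveI : IsProbabilityMeasure π := aux_isProbabilityMeasure_of_coupling hπ
  haveI : IsProbabilityMeasure α := aux_isProbabilityMeasure_of_coupling hα
  haveI : IsProbabilityMeasure β := aux_isProbabilityMeasure_of_coupling hβ
  set K := α.condKernel with hKdef
  set L := β.condKernel with hLdef
  have hK : μ ⊗ₘ K = α := by
    have h := α.disintegrate α.condKernel
    rwa [show α.fst = μ from hα.1] at h
  have hL : ν ⊗ₘ L = β := by
    have h := β.disintegrate β.condKernel
    rwa [show β.fst = ν from hβ.1] at h
  set κ : Kernel (ℝ × ℝ) (ℝ × ℝ) :=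
    (K.comap Prod.fst measurable_fst) ×ₖ (L.comap Prod.snd measurable_snd) with hκdef
  haveI : IsMarkovKernel κ := by rw [hκdef]; infer_instance
  have hκap : ∀ a : ℝ × ℝ, κ a = (K a.1).prod (L a.2) := by
    intro a
    rw [hκdef, Kernel.prod_apply, Kernel.comap_apply, Kernel.comap_apply]
  set γ := π ⊗ₘ κ with hγdef
  -- first marginal of `γ.map Prod.snd`
  have hmar1 : (γ.map Prod.snd).map Prod.fst = μ' := by
    rw [Measure.map_map measurable_fst measurable_snd]
    ext s hs
    rw [Measure.map_apply (measurable_fst.comp measurable_snd) hs, hγdef,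
      Measure.compProd_apply ((measurable_fst.comp measurable_snd) hs)]
    have hset : ∀ a : ℝ × ℝ,
        Prod.mk a ⁻¹' ((Prod.fst ∘ Prod.snd : (ℝ×ℝ)×(ℝ×ℝ) → ℝ) ⁻¹' s) = Prod.fst ⁻¹' s := by
      intro a; rfl
    have h1 : ∫⁻ a, κ a (Prod.mk a ⁻¹' ((Prod.fst ∘ Prod.snd : (ℝ×ℝ)×(ℝ×ℝ) → ℝ) ⁻¹' s)) ∂π
        = ∫⁻ a : ℝ × ℝ, K a.1 s ∂π := by
      refine lintegral_congr fun a => ?_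
      rw [hset a, hκap a, ← Set.prod_univ, Measure.prod_prod, measure_univ, mul_one]
    rw [h1, ← lintegral_map (K.measurable_coe hs) measurable_fst, hπ.1]
    -- ∫⁻ x, K x s ∂μ = μ' s
    have h2 : (μ ⊗ₘ K) (Prod.snd ⁻¹' s) = ∫⁻ x, K x s ∂μ := by
      rw [Measure.compProd_apply (measurable_snd hs)]
      rfl
    rw [← h2, hK, ← hα.2, Measure.map_apply measurable_snd hs]
  -- second marginal of `γ.map Prod.snd`
  have hmar2 : (γ.map Prod.snd).map Prod.snd = ν' := by
    rw [Measure.map_map measurable_snd measurable_snd]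
    ext s hs
    rw [Measure.map_apply (measurable_snd.comp measurable_snd) hs, hγdef,
      Measure.compProd_apply ((measurable_snd.comp measurable_snd) hs)]
    have h1 : ∫⁻ a, κ a (Prod.mk a ⁻¹' ((Prod.snd ∘ Prod.snd : (ℝ×ℝ)×(ℝ×ℝ) → ℝ) ⁻¹' s)) ∂π
        = ∫⁻ a : ℝ × ℝ, L a.2 s ∂π := by
      refine lintegral_congr fun a => ?_
      have hset : Prod.mk a ⁻¹' ((Prod.snd ∘ Prod.snd : (ℝ×ℝ)×(ℝ×ℝ) → ℝ) ⁻¹' s)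
          = Prod.snd ⁻¹' s := rfl
      rw [hset, hκap a, ← Set.univ_prod, Measure.prod_prod, measure_univ, one_mul]
    rw [h1, ← lintegral_map (L.measurable_coe hs) measurable_snd, hπ.2]
    have h2 : (ν ⊗ₘ L) (Prod.snd ⁻¹' s) = ∫⁻ y, L y s ∂ν := by
      rw [Measure.compProd_apply (measurable_snd hs)]
      rfl
    rw [← h2, hL, ← hβ.2, Measure.map_apply measurable_snd hs]
  refine ⟨γ.map Prod.snd, ⟨hmar1, hmar2⟩, ?_⟩
  -- γ is a coupling of π and γ.map Prod.snd
  have hγcoupling : IsCoupling γ π (γ.map Prod.snd) :=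
    ⟨Measure.fst_compProd π κ, rfl⟩
  refine le_trans (aux_WpCost_le hγcoupling) ?_
  -- cost computation
  have hm2 : Measurable fun q : ℝ × ℝ => edist q.1 q.2 ^ p := measurable_edist.pow_const p
  have hmax : ∀ u v : ℝ≥0∞, (max u v) ^ p ≤ u ^ p + v ^ p := by
    intro u v
    rcases max_cases u v with ⟨h, _⟩ | ⟨h, _⟩ <;> rw [h]
    · exact le_self_add
    · exact le_add_self
  have hgK : Measurable fun x : ℝ => ∫⁻ x', edist x x' ^ p ∂(K x) :=
    Measurable.lintegral_kernel_prod_right (f := fun x x' => edist x x' ^ p) hm2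
  have hgL : Measurable fun y : ℝ => ∫⁻ y', edist y y' ^ p ∂(L y) :=
    Measurable.lintegral_kernel_prod_right (f := fun y y' => edist y y' ^ p) hm2
  calc ∫⁻ q, edist q.1 q.2 ^ p ∂γ
      = ∫⁻ a, ∫⁻ b, edist a b ^ p ∂(κ a) ∂π := Measure.lintegral_compProd aux_cost_measurable
    _ ≤ ∫⁻ a : ℝ × ℝ,
          ((∫⁻ x', edist a.1 x' ^ p ∂(K a.1)) + ∫⁻ y', edist a.2 y' ^ p ∂(L a.2)) ∂π := by
        refine lintegral_mono fun a => ?_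
        rw [hκap a]
        calc ∫⁻ b, edist a b ^ p ∂((K a.1).prod (L a.2))
            ≤ ∫⁻ b : ℝ × ℝ, (edist a.1 b.1 ^ p + edist a.2 b.2 ^ p)
                ∂((K a.1).prod (L a.2)) := by
              refine lintegral_mono fun b => ?_
              rw [Prod.edist_eq]
              exact hmax _ _
          _ = (∫⁻ b : ℝ × ℝ, edist a.1 b.1 ^ p ∂((K a.1).prod (L a.2)))
              + ∫⁻ b : ℝ × ℝ, edist a.2 b.2 ^ p ∂((K a.1).prod (L a.2)) := by
              exact lintegral_add_left ((measurable_edist_right.comp measurable_fst).pow_const p) _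
          _ = (∫⁻ x', edist a.1 x' ^ p ∂(K a.1)) + ∫⁻ y', edist a.2 y' ^ p ∂(L a.2) := by
              congr 1
              · conv_rhs => rw [show K a.1 = ((K a.1).prod (L a.2)).map Prod.fst by
                  rw [show ((K a.1).prod (L a.2)).map Prod.fst = ((K a.1).prod (L a.2)).fst
                    from rfl, Measure.fst_prod]]
                rw [lintegral_map (measurable_edist_right.pow_const p) measurable_fst]
              · conv_rhs => rw [show L a.2 = ((K a.1).prod (L a.2)).map Prod.snd by
                  rw [show ((K a.1).prod (L a.2)).map Prod.snd = ((K a.1).prod (L a.2)).snd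
                    from rfl, Measure.snd_prod]]
                rw [lintegral_map (measurable_edist_right.pow_const p) measurable_snd]
    _ = (∫⁻ a : ℝ × ℝ, (∫⁻ x', edist a.1 x' ^ p ∂(K a.1)) ∂π)
        + ∫⁻ a : ℝ × ℝ, (∫⁻ y', edist a.2 y' ^ p ∂(L a.2)) ∂π :=
        lintegral_add_left (hgK.comp measurable_fst) _
    _ = (∫⁻ q, edist q.1 q.2 ^ p ∂α) + ∫⁻ q, edist q.1 q.2 ^ p ∂β := by
        congr 1
        · rw [← lintegral_map hgK measurable_fst, hπ.1, ← hK,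
            Measure.lintegral_compProd hm2]
        · rw [← lintegral_map hgL measurable_snd, hπ.2, ← hL,
            Measure.lintegral_compProd hm2]

end Glue

lemma aux_WpCost_lt_top (p : ℝ) (hp : 1 ≤ p) (μ ν : Measure ℝ)
    [IsProbabilityMeasure μ] [IsProbabilityMeasure ν]
    (hμ : (∫⁻ x, ENNReal.ofReal (|x| ^ p) ∂μ) < ⊤)
    (hν : (∫⁻ x, ENNReal.ofReal (|x| ^ p) ∂ν) < ⊤) :
    WpCost p μ ν < ⊤ := by
  have hp0 : (0:ℝ) ≤ p := le_trans zero_le_one hp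
  have hcpl : IsCoupling (μ.prod ν) μ ν := by
    constructor
    · rw [show (μ.prod ν).map Prod.fst = (μ.prod ν).fst from rfl, Measure.fst_prod]
    · rw [show (μ.prod ν).map Prod.snd = (μ.prod ν).snd from rfl, Measure.snd_prod]
  refine lt_of_le_of_lt (aux_WpCost_le hcpl) ?_
  have hf : Measurable fun x : ℝ => ENNReal.ofReal (|x| ^ p) :=
    (measurable_id.abs.pow_const p).ennreal_ofReal
  have hreal : ∀ x y : ℝ, |x - y| ^ p ≤ 2 ^ p * (|x| ^ p + |y| ^ p) := by
    intro x y
    have h1 : |x - y| ≤ 2 * max |x| |y| := by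
      calc |x - y| ≤ |x| + |y| := abs_sub x y
        _ ≤ 2 * max |x| |y| := by
            rw [two_mul]
            exact add_le_add (le_max_left _ _) (le_max_right _ _)
    calc |x - y| ^ p ≤ (2 * max |x| |y|) ^ p :=
          Real.rpow_le_rpow (abs_nonneg _) h1 hp0
      _ = 2 ^ p * max |x| |y| ^ p :=
          Real.mul_rpow (by norm_num) (le_trans (abs_nonneg x) (le_max_left _ _))
      _ ≤ 2 ^ p * (|x| ^ p + |y| ^ p) := by
          refine mul_le_mul_of_nonneg_left ?_ (Real.rpow_nonneg (by norm_num) p)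
          rcases max_cases |x| |y| with ⟨h, _⟩ | ⟨h, _⟩ <;> rw [h]
          · exact le_add_of_nonneg_right (Real.rpow_nonneg (abs_nonneg _) p)
          · exact le_add_of_nonneg_left (Real.rpow_nonneg (abs_nonneg _) p)
  have hpt : ∀ q : ℝ × ℝ, edist q.1 q.2 ^ p
      ≤ ENNReal.ofReal (2 ^ p) * (ENNReal.ofReal (|q.1| ^ p) + ENNReal.ofReal (|q.2| ^ p)) := by
    intro q
    rw [edist_dist, Real.dist_eq, ENNReal.ofReal_rpow_of_nonneg (abs_nonneg _) hp0,
      ← ENNReal.ofReal_add (Real.rpow_nonneg (abs_nonneg _) p)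
        (Real.rpow_nonneg (abs_nonneg _) p),
      ← ENNReal.ofReal_mul (Real.rpow_nonneg (by norm_num) p)]
    exact ENNReal.ofReal_le_ofReal (hreal q.1 q.2)
  calc ∫⁻ q, edist q.1 q.2 ^ p ∂(μ.prod ν)
      ≤ ∫⁻ q : ℝ × ℝ, ENNReal.ofReal (2 ^ p)
          * (ENNReal.ofReal (|q.1| ^ p) + ENNReal.ofReal (|q.2| ^ p)) ∂(μ.prod ν) :=
        lintegral_mono hpt
    _ = ENNReal.ofReal (2 ^ p)
        * ((∫⁻ q : ℝ × ℝ, ENNReal.ofReal (|q.1| ^ p) ∂(μ.prod ν))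
          + ∫⁻ q : ℝ × ℝ, ENNReal.ofReal (|q.2| ^ p) ∂(μ.prod ν)) := by
        rw [lintegral_const_mul _
            (show Measurable fun q : ℝ × ℝ =>
                ENNReal.ofReal (|q.1| ^ p) + ENNReal.ofReal (|q.2| ^ p) from
              (hf.comp measurable_fst).add (hf.comp measurable_snd)),
          lintegral_add_left
            (show Measurable fun q : ℝ × ℝ => ENNReal.ofReal (|q.1| ^ p) from
              hf.comp measurable_fst)]
    _ = ENNReal.ofReal (2 ^ p)
        * ((∫⁻ x, ENNReal.ofReal (|x| ^ p) ∂μ) + ∫⁻ y, ENNReal.ofReal (|y| ^ p) ∂ν) := by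
        congr 1
        congr 1
        · conv_rhs => rw [show μ = (μ.prod ν).map Prod.fst by
            rw [show (μ.prod ν).map Prod.fst = (μ.prod ν).fst from rfl, Measure.fst_prod]]
          rw [lintegral_map hf measurable_fst]
        · conv_rhs => rw [show ν = (μ.prod ν).map Prod.snd by
            rw [show (μ.prod ν).map Prod.snd = (μ.prod ν).snd from rfl, Measure.snd_prod]]
          rw [lintegral_map hf measurable_snd]
    _ < ⊤ := by
        refine ENNReal.mul_lt_top ?_ ?_
        · exact ENNReal.ofReal_lt_top
        · exact ENNReal.add_lt_top.mpr ⟨hμ, hν⟩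

lemma aux_biInf_le (p : ℝ) (hp : 1 ≤ p) (μ ν μ' ν' : Measure ℝ)
    [IsProbabilityMeasure μ] [IsProbabilityMeasure ν]
    [IsProbabilityMeasure μ'] [IsProbabilityMeasure ν']
    (hA : WpCost p μ μ' < ⊤) (hB : WpCost p ν ν' < ⊤)
    (a : Measure (ℝ × ℝ)) (ha : IsCoupling a μ ν) :
    ⨅ b ∈ {π : Measure (ℝ × ℝ) | IsCoupling π μ' ν'}, Wp p a b
      ≤ (WpCost p μ μ' + WpCost p ν ν') ^ (1 / p) := by
  have hp0 : (0:ℝ) < p := lt_of_lt_of_le zero_lt_one hp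
  set t := ⨅ b ∈ {π : Measure (ℝ × ℝ) | IsCoupling π μ' ν'}, Wp p a b with ht
  have key : t ^ p ≤ WpCost p μ μ' + WpCost p ν ν' := by
    refine ENNReal.le_of_forall_pos_le_add fun ε hε hfin => ?_
    have hε2 : (0:ℝ≥0∞) < (ε : ℝ≥0∞) / 2 :=
      ENNReal.div_pos (by exact_mod_cast hε.ne') (by norm_num)
    have hltA : WpCost p μ μ' < WpCost p μ μ' + (ε : ℝ≥0∞) / 2 :=
      ENNReal.lt_add_right hA.ne hε2.ne'
    have hltB : WpCost p ν ν' < WpCost p ν ν' + (ε : ℝ≥0∞) / 2 :=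
      ENNReal.lt_add_right hB.ne hε2.ne'
    obtain ⟨α, hαlt⟩ := iInf_lt_iff.mp
      (show (⨅ π ∈ {π : Measure (ℝ × ℝ) | IsCoupling π μ μ'}, ∫⁻ q, edist q.1 q.2 ^ p ∂π)
        < WpCost p μ μ' + (ε : ℝ≥0∞) / 2 from hltA)
    obtain ⟨hαmem, hαcost⟩ := iInf_lt_iff.mp hαlt
    obtain ⟨β, hβlt⟩ := iInf_lt_iff.mp
      (show (⨅ π ∈ {π : Measure (ℝ × ℝ) | IsCoupling π ν ν'}, ∫⁻ q, edist q.1 q.2 ^ p ∂π)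
        < WpCost p ν ν' + (ε : ℝ≥0∞) / 2 from hltB)
    obtain ⟨hβmem, hβcost⟩ := iInf_lt_iff.mp hβlt
    obtain ⟨π', hπ'cpl, hπ'cost⟩ := aux_glue p μ ν μ' ν' a ha α β hαmem hβmem
    have h1 : t ≤ Wp p a π' := iInf₂_le π' hπ'cpl
    have h2 : t ^ p ≤ WpCost p a π' := by
      calc t ^ p ≤ (Wp p a π') ^ p := ENNReal.rpow_le_rpow h1 hp0.le
        _ = WpCost p a π' := by
            rw [Wp, ← ENNReal.rpow_mul, one_div_mul_cancel hp0.ne', ENNReal.rpow_one]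
    calc t ^ p ≤ WpCost p a π' := h2
      _ ≤ (∫⁻ q, edist q.1 q.2 ^ p ∂α) + ∫⁻ q, edist q.1 q.2 ^ p ∂β := hπ'cost
      _ ≤ (WpCost p μ μ' + (ε : ℝ≥0∞) / 2) + (WpCost p ν ν' + (ε : ℝ≥0∞) / 2) :=
          add_le_add hαcost.le hβcost.le
      _ = WpCost p μ μ' + WpCost p ν ν' + ε := by
          rw [add_add_add_comm, ENNReal.add_halves]
  calc t = (t ^ p) ^ (1 / p) := by
        rw [← ENNReal.rpow_mul, mul_one_div_cancel hp0.ne', ENNReal.rpow_one]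
    _ ≤ (WpCost p μ μ' + WpCost p ν ν') ^ (1 / p) :=
        ENNReal.rpow_le_rpow key (by positivity)

/-- the Hausdorff `W_p`-distance between the sets of couplings
`Π(μ,ν)` and `Π(μ',ν')` is at most `(W_p^p(μ,μ') + W_p^p(ν,ν'))^{1/p}`, hence at most
`W_p(μ,μ') + W_p(ν,ν')`. -/
theorem hausdorff_couplings_le (p : ℝ) (hp : 1 ≤ p)
    (μ ν μ' ν' : Measure ℝ)
    [IsProbabilityMeasure μ] [IsProbabilityMeasure ν]
    [IsProbabilityMeasure μ'] [IsProbabilityMeasure ν']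
    (hμ : (∫⁻ x, ENNReal.ofReal (|x| ^ p) ∂μ) < ⊤)
    (hν : (∫⁻ x, ENNReal.ofReal (|x| ^ p) ∂ν) < ⊤)
    (hμ' : (∫⁻ x, ENNReal.ofReal (|x| ^ p) ∂μ') < ⊤)
    (hν' : (∫⁻ x, ENNReal.ofReal (|x| ^ p) ∂ν') < ⊤) :
    hausdorffWp p {π : Measure (ℝ × ℝ) | IsCoupling π μ ν}
        {π : Measure (ℝ × ℝ) | IsCoupling π μ' ν'} ≤
      (WpCost p μ μ' + WpCost p ν ν') ^ (1 / p) ∧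
    (WpCost p μ μ' + WpCost p ν ν') ^ (1 / p) ≤ Wp p μ μ' + Wp p ν ν' := by
  have hp0 : (0:ℝ) < p := lt_of_lt_of_le zero_lt_one hp
  have hA : WpCost p μ μ' < ⊤ := aux_WpCost_lt_top p hp μ μ' hμ hμ'
  have hB : WpCost p ν ν' < ⊤ := aux_WpCost_lt_top p hp ν ν' hν hν'
  constructor
  · rw [hausdorffWp]
    apply max_le
    · exact iSup₂_le fun a ha => aux_biInf_le p hp μ ν μ' ν' hA hB a ha
    · refine iSup₂_le fun b hb => ?_
      have h1 : (⨅ a ∈ {π : Measure (ℝ × ℝ) | IsCoupling π μ ν}, Wp p a b)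
          = ⨅ a ∈ {π : Measure (ℝ × ℝ) | IsCoupling π μ ν}, Wp p b a :=
        iInf_congr fun a => iInf_congr fun _ => aux_Wp_comm a b
      rw [h1]
      have h2 := aux_biInf_le p hp μ' ν' μ ν
        (by rwa [aux_WpCost_comm] : WpCost p μ' μ < ⊤)
        (by rwa [aux_WpCost_comm] : WpCost p ν' ν < ⊤) b hb
      rwa [aux_WpCost_comm μ' μ, aux_WpCost_comm ν' ν] at h2
  · have h := ENNReal.rpow_add_rpow_le_add (Wp p μ μ') (Wp p ν ν') hp
    have e : ∀ x : ℝ≥0∞, (x ^ (1 / p)) ^ p = x := fun x => by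
      rw [← ENNReal.rpow_mul, one_div_mul_cancel hp0.ne', ENNReal.rpow_one]
    simp only [Wp] at h ⊢
    rw [e, e] at h
    exact h
end

section
/- Let p ≥ 1 and let J : P_p(ℝ × U × ℝ) → P_p(ℝ × U × P_p(ℝ)) be defined by J(π) = (x,u,π_{x,u})_# π, where π_{x,u} is the disintegration of π with respect to its first two coordinates, and U is a Polish metric space. If π¹, π² ∈ P_p(ℝ × U × ℝ) then the adapted Wasserstein distance AW_p(π¹, π²), defined as the infimum over couplings χ of the (ℝ×U)-marginals of ∫ (d((x₁,u₁),(x₂,u₂))^p + W_p^p(π¹_{x₁,u₁}, π²_{x₂,u₂})) dχ, all raised to 1/p, equals W_p(J(π¹), J(π²)), the p-Wasserstein distance on P_p(ℝ × U × P_p(ℝ)). -/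
open MeasureTheory

variable {U : Type*} [MetricSpace U] [TopologicalSpace.SeparableSpace U] [CompleteSpace U]
  [MeasurableSpace U] [BorelSpace U]

/-- `J(π) = (x,u,π_{x,u})_# π`: the image of `π` under the map attaching the
disintegration with respect to the first two coordinates. -/
noncomputable def Jmap (π : Measure ((ℝ × U) × ℝ)) [IsFiniteMeasure π] :
    Measure ((ℝ × U) × Measure ℝ) :=
  π.map (fun q => (q.1, π.condKernel q.1))

/-- The `p`-th power adapted transport cost between `π¹, π² ∈ P_p(ℝ × U × ℝ)`:
infimum over couplings `χ` of the `(ℝ×U)`-marginals of the sum of the `p`-th power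
distances of the first two coordinates and the `p`-th power Wasserstein cost of the
disintegrations. -/
noncomputable def AWpCost (p : ℝ) (π₁ π₂ : Measure ((ℝ × U) × ℝ))
    [IsFiniteMeasure π₁] [IsFiniteMeasure π₂] : ENNReal :=
  ⨅ χ ∈ {χ : Measure ((ℝ × U) × (ℝ × U)) |
      IsCoupling χ (π₁.map Prod.fst) (π₂.map Prod.fst)},
    ∫⁻ q, edist q.1.1 q.2.1 ^ p + edist q.1.2 q.2.2 ^ p +
      WpCost p (π₁.condKernel q.1) (π₂.condKernel q.2) ∂χ

/-- The measurable set of pairs `(a, m)` such that `m` is a probability measure agreeing with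
`κ a` on all rational `Iic`-intervals; this forces `m = κ a`. -/
noncomputable def Sgraph {α : Type*} [MeasurableSpace α]
    (κ : ProbabilityTheory.Kernel α ℝ) : Set (α × Measure ℝ) :=
  {x | x.2 Set.univ = 1 ∧ ∀ q : ℚ, x.2 (Set.Iic (q : ℝ)) = κ x.1 (Set.Iic (q : ℝ))}

lemma measurableSet_Sgraph {α : Type*} [MeasurableSpace α]
    (κ : ProbabilityTheory.Kernel α ℝ) : MeasurableSet (Sgraph κ) := by
  have h1 : MeasurableSet {x : α × Measure ℝ | x.2 Set.univ = 1} :=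
    ((Measure.measurable_coe MeasurableSet.univ).comp measurable_snd) (measurableSet_singleton 1)
  have h2 : ∀ q : ℚ, MeasurableSet
      {x : α × Measure ℝ | x.2 (Set.Iic (q:ℝ)) = κ x.1 (Set.Iic (q:ℝ))} := by
    intro q
    have hf : Measurable fun x : α × Measure ℝ => x.2 (Set.Iic (q:ℝ)) :=
      (Measure.measurable_coe measurableSet_Iic).comp measurable_snd
    have hg : Measurable fun x : α × Measure ℝ => κ x.1 (Set.Iic (q:ℝ)) :=
      (κ.measurable_coe measurableSet_Iic).comp measurable_fst
    have : {x : α × Measure ℝ | x.2 (Set.Iic (q:ℝ)) = κ x.1 (Set.Iic (q:ℝ))} =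
        {x | x.2 (Set.Iic (q:ℝ)) ≤ κ x.1 (Set.Iic (q:ℝ))} ∩
          {x | κ x.1 (Set.Iic (q:ℝ)) ≤ x.2 (Set.Iic (q:ℝ))} := by
      ext x; simp [le_antisymm_iff]
    rw [this]
    exact (measurableSet_le hf hg).inter (measurableSet_le hg hf)
  have : Sgraph κ = {x : α × Measure ℝ | x.2 Set.univ = 1} ∩
      ⋂ q : ℚ, {x : α × Measure ℝ | x.2 (Set.Iic (q:ℝ)) = κ x.1 (Set.Iic (q:ℝ))} := by
    ext x; simp [Sgraph, Set.mem_iInter]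
  rw [this]
  exact h1.inter (MeasurableSet.iInter fun q => h2 q)

lemma eq_of_mem_Sgraph {α : Type*} [MeasurableSpace α]
    (κ : ProbabilityTheory.Kernel α ℝ) [ProbabilityTheory.IsMarkovKernel κ]
    {x : α × Measure ℝ} (hx : x ∈ Sgraph κ) : x.2 = κ x.1 := by
  have hfin : IsFiniteMeasure x.2 := ⟨by rw [hx.1]; exact ENNReal.one_lt_top⟩
  refine ext_of_generate_finite _ ?_ Real.isPiSystem_Iic_rat ?_ ?_
  · rw [Real.borel_eq_generateFrom_Iic_rat.symm]
    exact (BorelSpace.measurable_eq (α := ℝ))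
  · rintro s hs
    simp only [Set.mem_iUnion, Set.mem_singleton_iff] at hs
    obtain ⟨q, rfl⟩ := hs
    exact hx.2 q
  · rw [hx.1, measure_univ]

/-- the adapted Wasserstein distance `AW_p(π¹,π²)` coincides with
the `p`-Wasserstein distance between `J(π¹)` and `J(π²)` on `P_p(ℝ × U × P_p(ℝ))`
(with the `p`-product cost). -/
theorem AWp_eq_Wp_J (p : ℝ) (hp : 1 ≤ p) (u₀ : U)
    (π₁ π₂ : Measure ((ℝ × U) × ℝ))
    [IsProbabilityMeasure π₁] [IsProbabilityMeasure π₂]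
    (hmom₁ : (∫⁻ q, edist q.1.1 (0 : ℝ) ^ p + edist q.1.2 u₀ ^ p
        + edist q.2 (0 : ℝ) ^ p ∂π₁) < ⊤)
    (hmom₂ : (∫⁻ q, edist q.1.1 (0 : ℝ) ^ p + edist q.1.2 u₀ ^ p
        + edist q.2 (0 : ℝ) ^ p ∂π₂) < ⊤) :
    AWpCost p π₁ π₂ ^ (1 / p) =
      (⨅ γ ∈ {γ : Measure (((ℝ × U) × Measure ℝ) × ((ℝ × U) × Measure ℝ)) |
          IsCoupling γ (Jmap π₁) (Jmap π₂)},
        ∫⁻ q, edist q.1.1.1 q.2.1.1 ^ p + edist q.1.1.2 q.2.1.2 ^ p +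
          WpCost p q.1.2 q.2.2 ∂γ) ^ (1 / p) := by
  have hκ₁ : Measurable (fun a : ℝ × U => (π₁.condKernel a : Measure ℝ)) :=
    π₁.condKernel.measurable
  have hκ₂ : Measurable (fun a : ℝ × U => (π₂.condKernel a : Measure ℝ)) :=
    π₂.condKernel.measurable
  have he₁ : Measurable (fun a : ℝ × U => (a, (π₁.condKernel a : Measure ℝ))) :=
    measurable_id.prodMk hκ₁
  have he₂ : Measurable (fun a : ℝ × U => (a, (π₂.condKernel a : Measure ℝ))) :=
    measurable_id.prodMk hκ₂
  have hE₁ : Measurable (fun q : (ℝ × U) × ℝ => (q.1, (π₁.condKernel q.1 : Measure ℝ))) :=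
    he₁.comp measurable_fst
  have hE₂ : Measurable (fun q : (ℝ × U) × ℝ => (q.1, (π₂.condKernel q.1 : Measure ℝ))) :=
    he₂.comp measurable_fst
  have haeJ₁ : ∀ᵐ x ∂(Jmap π₁), x ∈ Sgraph π₁.condKernel := by
    unfold Jmap
    refine (ae_map_iff hE₁.aemeasurable (measurableSet_Sgraph _)).2 ?_
    filter_upwards with q
    exact ⟨measure_univ, fun r => rfl⟩
  have haeJ₂ : ∀ᵐ x ∂(Jmap π₂), x ∈ Sgraph π₂.condKernel := by
    unfold Jmap
    refine (ae_map_iff hE₂.aemeasurable (measurableSet_Sgraph _)).2 ?_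
    filter_upwards with q
    exact ⟨measure_univ, fun r => rfl⟩
  have key : AWpCost p π₁ π₂ =
      ⨅ γ ∈ {γ : Measure (((ℝ × U) × Measure ℝ) × ((ℝ × U) × Measure ℝ)) |
          IsCoupling γ (Jmap π₁) (Jmap π₂)},
        ∫⁻ q, edist q.1.1.1 q.2.1.1 ^ p + edist q.1.1.2 q.2.1.2 ^ p +
          WpCost p q.1.2 q.2.2 ∂γ := by
    refine le_antisymm ?_ ?_
    · -- `AWpCost ≤` the infimum over couplings of the `Jmap`s
      refine le_iInf₂ fun γ hγ => ?_
      have hγ' : IsCoupling γ (Jmap π₁) (Jmap π₂) := hγ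
      set h : ((ℝ × U) × Measure ℝ) × ((ℝ × U) × Measure ℝ) → (ℝ × U) × (ℝ × U) :=
        fun q => (q.1.1, q.2.1) with hhdef
      have hhm : Measurable h :=
        (measurable_fst.comp measurable_fst).prodMk (measurable_fst.comp measurable_snd)
      have hcoupl : IsCoupling (γ.map h) (π₁.map Prod.fst) (π₂.map Prod.fst) := by
        constructor
        · rw [Measure.map_map measurable_fst hhm]
          have h1 : (Prod.fst ∘ h) =
              (Prod.fst ∘ (Prod.fst : ((ℝ×U) × Measure ℝ) × ((ℝ×U) × Measure ℝ) →
                (ℝ×U) × Measure ℝ)) := rfl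
          rw [h1, ← Measure.map_map measurable_fst measurable_fst, hγ'.1]
          unfold Jmap
          rw [Measure.map_map measurable_fst hE₁]
          rfl
        · rw [Measure.map_map measurable_snd hhm]
          have h1 : (Prod.snd ∘ h) =
              (Prod.fst ∘ (Prod.snd : ((ℝ×U) × Measure ℝ) × ((ℝ×U) × Measure ℝ) →
                (ℝ×U) × Measure ℝ)) := rfl
          rw [h1, ← Measure.map_map measurable_fst measurable_snd, hγ'.2]
          unfold Jmap
          rw [Measure.map_map measurable_fst hE₂]
          rfl
      have haeS₁ : ∀ᵐ z ∂γ, z.1 ∈ Sgraph π₁.condKernel :=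
        (ae_map_iff measurable_fst.aemeasurable (measurableSet_Sgraph _)).1
          (by rw [hγ'.1]; exact haeJ₁)
      have haeS₂ : ∀ᵐ z ∂γ, z.2 ∈ Sgraph π₂.condKernel :=
        (ae_map_iff measurable_snd.aemeasurable (measurableSet_Sgraph _)).1
          (by rw [hγ'.2]; exact haeJ₂)
      calc AWpCost p π₁ π₂
          ≤ ∫⁻ q, edist q.1.1 q.2.1 ^ p + edist q.1.2 q.2.2 ^ p +
              WpCost p (π₁.condKernel q.1) (π₂.condKernel q.2) ∂(γ.map h) :=
            iInf₂_le (γ.map h) hcoupl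
        _ ≤ ∫⁻ z, edist (h z).1.1 (h z).2.1 ^ p + edist (h z).1.2 (h z).2.2 ^ p +
              WpCost p (π₁.condKernel (h z).1) (π₂.condKernel (h z).2) ∂γ :=
            lintegral_map_le _ h
        _ = ∫⁻ z, edist z.1.1.1 z.2.1.1 ^ p + edist z.1.1.2 z.2.1.2 ^ p +
              WpCost p z.1.2 z.2.2 ∂γ := by
            refine lintegral_congr_ae ?_
            filter_upwards [haeS₁, haeS₂] with z h1 h2
            rw [eq_of_mem_Sgraph _ h1, eq_of_mem_Sgraph _ h2]
    · -- the infimum over couplings of the `Jmap`s `≤ AWpCost`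
      refine le_iInf₂ fun χ hχ => ?_
      have hχ' : IsCoupling χ (π₁.map Prod.fst) (π₂.map Prod.fst) := hχ
      set g : (ℝ × U) × (ℝ × U) → ((ℝ × U) × Measure ℝ) × ((ℝ × U) × Measure ℝ) :=
        fun r => ((r.1, π₁.condKernel r.1), (r.2, π₂.condKernel r.2)) with hgdef
      have hgm : Measurable g := (he₁.comp measurable_fst).prodMk (he₂.comp measurable_snd)
      have hcoupl : IsCoupling (χ.map g) (Jmap π₁) (Jmap π₂) := by
        constructor
        · rw [Measure.map_map measurable_fst hgm]
          have h1 : (Prod.fst ∘ g) =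
              (fun a : ℝ × U => (a, (π₁.condKernel a : Measure ℝ))) ∘ Prod.fst := rfl
          rw [h1, ← Measure.map_map he₁ measurable_fst, hχ'.1]
          unfold Jmap
          rw [Measure.map_map he₁ measurable_fst]
          rfl
        · rw [Measure.map_map measurable_snd hgm]
          have h1 : (Prod.snd ∘ g) =
              (fun a : ℝ × U => (a, (π₂.condKernel a : Measure ℝ))) ∘ Prod.snd := rfl
          rw [h1, ← Measure.map_map he₂ measurable_snd, hχ'.2]
          unfold Jmap
          rw [Measure.map_map he₂ measurable_fst]
          rfl
      refine iInf₂_le_of_le (χ.map g) hcoupl ?_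
      exact lintegral_map_le _ g
  rw [key]
end
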